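/- arXiv:2603.24127 — 9 statements merged into one kernel-verified Lean document; each statement's English description precedes it below -/
import Mathlib

section
/- For any i ∈ 𝕀, the number D_i of fixed points x of std(G) with G_x = i has the same distribution as min(X, n), where X is a random variable with distribution Geo_0(1 − p_i); equivalently, P(D_i ≥ l) = p_i^l for every 0 ≤ l ≤ n and D_i ≤ n almost surely. -/
/-!
The rank of a position `x` with `G_x = i` is `#{y | G_y < i} + #{y < x | G_y = i}`, so `x` is
a fixed point of `std G` exactly when `#{y | G_y < i}` entries before `x` differ from `i`: the
fixed points with value `i` form the run of `i`'s in one particular gap between the entries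
different from `i`.

Deleting the first of these fixed points leaves a sample of size `n - 1` in which the deleted
position is the least slot where inserting `i` creates a fixed point, and every sample has exactly
one such least slot. Deleting a coordinate of an i.i.d. sample is measure preserving, so
`P(D_n ≥ l + 1) = p_i * P(D_(n-1) ≥ l)`, and induction on `l` gives `P(D_n ≥ l) = p_i ^ l`.
-/

open MeasureTheory ProbabilityTheory Finset

lemma Fin.card_filter_univ_succAbove {m : ℕ} (a : Fin (m + 1)) (p : Fin (m + 1) → Prop)
    [DecidablePred p] :
    #{x | p x} = (if p a then 1 else 0) + #{y : Fin m | p (a.succAbove y)} := by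
  simp only [card_filter]
  exact Fin.sum_univ_succAbove _ a

lemma Equiv.Perm.card_filter_apply_lt {n : ℕ} (σ : Equiv.Perm (Fin n)) (x : Fin n) :
    #{y | σ y < σ x} = σ x := by
  rw [← Fin.card_Iio, ← filter_gt_eq_Iio]
  exact card_equiv σ (by simp)

lemma Nat.exists_eq_of_succ_le_add_one {f : ℕ → ℕ} {c : ℕ} :
    ∀ {m : ℕ}, (∀ k < m, f (k + 1) ≤ f k + 1) → f 0 ≤ c → c ≤ f m → ∃ k ≤ m, f k = c
  | 0, _, h0, hm => ⟨0, le_rfl, le_antisymm h0 hm⟩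
  | m + 1, hstep, h0, hm => by
    by_cases hc : c ≤ f m
    · obtain ⟨k, hk, hfk⟩ :=
        Nat.exists_eq_of_succ_le_add_one (fun k hk => hstep k (by omega)) h0 hc
      exact ⟨k, by omega, hfk⟩
    · exact ⟨m + 1, le_rfl, by have := hstep m (by omega); omega⟩

lemma MeasureTheory.measure_eq_sum_measure_isLeast {α ι : Type*} [MeasurableSpace α]
    [DiscreteMeasurableSpace α] [Fintype ι] [LinearOrder ι] (μ : Measure α) (S : α → Finset ι)
    {p : α → Prop} (hp : ∀ x, p x → (S x).Nonempty) :
    μ {x | p x} = ∑ a, μ {x | p x ∧ IsLeast (S x : Set ι) a} := by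
  have hp_eq : {x | p x} = ⋃ a ∈ (univ : Finset ι), {x | p x ∧ IsLeast (S x : Set ι) a} := by
    ext x
    simp only [mem_univ, Set.iUnion_true, Set.mem_iUnion, Set.mem_ofPred_eq]
    exact ⟨fun hx => ⟨_, hx, isLeast_min' _ (hp x hx)⟩, fun ⟨_, hx, _⟩ => hx⟩
  rw [hp_eq]
  refine measure_biUnion_finset (fun a _ b _ hab => Set.disjoint_left.2 fun x ha hb => ?_)
    fun _ _ => .of_discrete
  exact hab (ha.2.unique hb.2)

lemma MeasureTheory.Measure.pi_setOf_apply_eq_and_removeNth_mem {β : Type*} [MeasurableSpace β]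
    (ν : Measure β) [SigmaFinite ν] {m : ℕ} (a : Fin (m + 1)) (i : β) (S : Set (Fin m → β)) :
    Measure.pi (fun _ => ν) {g : Fin (m + 1) → β | g a = i ∧ a.removeNth g ∈ S} =
      ν {i} * Measure.pi (fun _ => ν) S := by
  have hset : {g : Fin (m + 1) → β | g a = i ∧ a.removeNth g ∈ S} =
      MeasurableEquiv.piFinSuccAbove (fun _ => β) a ⁻¹' ({i} ×ˢ S) := by
    ext g
    simp [MeasurableEquiv.piFinSuccAbove, Fin.insertNthEquiv]
  rw [hset, (measurePreserving_piFinSuccAbove (fun _ => ν) a).measure_preimage_equiv,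
    Measure.prod_prod]

section FixedPoints

variable {β : Type*} [LinearOrder β] {n m : ℕ}

def countNeBelow (g : Fin n → β) (i : β) (k : ℕ) : ℕ := #{y : Fin n | (y : ℕ) < k ∧ g y ≠ i}

def countLt (g : Fin n → β) (i : β) : ℕ := #{y | g y < i}

/-- The fixed points of `std g` at which `g` takes the value `i`
(see `apply_eq_self_and_eq_iff_mem_fixedPointsAt`). -/
def fixedPointsAt (g : Fin n → β) (i : β) : Finset (Fin n) :=
  {x | g x = i ∧ countNeBelow g i x = countLt g i}

lemma mem_fixedPointsAt {g : Fin n → β} {i : β} {x : Fin n} :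
    x ∈ fixedPointsAt g i ↔ g x = i ∧ countNeBelow g i x = countLt g i := by
  simp [fixedPointsAt]

lemma apply_eq_self_and_eq_iff_mem_fixedPointsAt {σ : Equiv.Perm (Fin n)} {g : Fin n → β}
    (hσ : ∀ j k, σ j < σ k ↔ g j < g k ∨ (g j = g k ∧ j < k)) (i : β) (x : Fin n) :
    σ x = x ∧ g x = i ↔ x ∈ fixedPointsAt g i := by
  rw [mem_fixedPointsAt, countNeBelow, countLt]
  refine and_comm.trans (and_congr_right fun hx => ?_)
  have hrank : (σ x : ℕ) = #{y | g y < i} + #{y | y < x ∧ g y = i} := by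
    rw [← σ.card_filter_apply_lt, ← card_union_of_disjoint]
    · congr 1; ext y; simp [hσ, hx, and_comm]
    · exact disjoint_filter.2 fun y _ h1 h2 => h1.ne h2.2
  have hpos : (x : ℕ) = #{y | y < x ∧ g y = i} + #{y : Fin n | (y : ℕ) < x ∧ g y ≠ i} := by
    have := card_filter_add_card_filter_not (s := {y | y < x}) (fun y => g y = i)
    rw [filter_filter, filter_filter, filter_gt_eq_Iio, Fin.card_Iio] at this
    simpa using this.symm
  rw [← Fin.val_inj]
  omega

lemma ncard_setOf_apply_eq_self_and_eq {σ : Equiv.Perm (Fin n)} {g : Fin n → β}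
    (hσ : ∀ j k, σ j < σ k ↔ g j < g k ∨ (g j = g k ∧ j < k)) (i : β) :
    {x | σ x = x ∧ g x = i}.ncard = #(fixedPointsAt g i) := by
  rw [← Set.ncard_coe_finset]
  congr 1
  ext x
  exact apply_eq_self_and_eq_iff_mem_fixedPointsAt hσ i x

lemma fixedPointsAt_comp {γ : Type*} [LinearOrder γ] {f : β → γ} {i : β}
    (hlt : ∀ r, f r < f i ↔ r < i) (heq : ∀ r, f r = f i ↔ r = i) (g : Fin n → β) :
    fixedPointsAt (f ∘ g) (f i) = fixedPointsAt g i := by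
  ext x
  simp [mem_fixedPointsAt, countNeBelow, countLt, hlt, heq]

lemma countNeBelow_mono (g : Fin n → β) (i : β) : Monotone (countNeBelow g i) :=
  fun _ _ hjk => card_le_card fun y hy => by
    simp only [mem_filter_univ] at hy ⊢
    exact ⟨hy.1.trans_le hjk, hy.2⟩

lemma countNeBelow_succ (g : Fin n → β) (i : β) (z : Fin n) :
    countNeBelow g i (z + 1) = countNeBelow g i z + if g z = i then 0 else 1 := by
  have : (if g z = i then 0 else 1) = ∑ y, if y = z then (if g y = i then 0 else 1) else 0 := by
    simp
  simp only [countNeBelow, card_filter, this, ← sum_add_distrib]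
  refine sum_congr rfl fun y _ => ?_
  rcases eq_or_ne y z with rfl | hyz
  · by_cases g y = i <;> simp [*]
  · have : (y : ℕ) < z + 1 ↔ (y : ℕ) < z := by have := Fin.val_ne_iff.2 hyz; omega
    simp only [this, hyz, if_false, add_zero]

lemma countNeBelow_insertNth (a : Fin (m + 1)) (i : β) (h : Fin m → β) (k : ℕ) :
    countNeBelow (a.insertNth i h) i k = #{y : Fin m | (a.succAbove y : ℕ) < k ∧ h y ≠ i} := by
  simp [countNeBelow, Fin.card_filter_univ_succAbove a]

lemma countLt_insertNth (a : Fin (m + 1)) (i : β) (h : Fin m → β) :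
    countLt (a.insertNth i h) i = countLt h i := by
  simp [countLt, Fin.card_filter_univ_succAbove a]

lemma succAbove_mem_fixedPointsAt_insertNth {a : Fin (m + 1)} {i : β} {h : Fin m → β}
    {y : Fin m} : a.succAbove y ∈ fixedPointsAt (a.insertNth i h) i ↔ y ∈ fixedPointsAt h i := by
  rw [mem_fixedPointsAt, mem_fixedPointsAt, countNeBelow_insertNth, countLt_insertNth,
    Fin.insertNth_apply_succAbove]
  simp only [countNeBelow, Fin.val_fin_lt, Fin.succAbove_lt_succAbove_iff]

lemma self_mem_fixedPointsAt_insertNth {a : Fin (m + 1)} {i : β} {h : Fin m → β} :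
    a ∈ fixedPointsAt (a.insertNth i h) i ↔ countNeBelow h i a = countLt h i := by
  rw [mem_fixedPointsAt, countNeBelow_insertNth, countLt_insertNth, Fin.insertNth_apply_same]
  have (y : Fin m) : (a.succAbove y : ℕ) < a ↔ (y : ℕ) < a := by
    rw [← Fin.lt_def, Fin.succAbove_lt_iff_castSucc_lt, Fin.lt_def, Fin.val_castSucc]
  simp only [true_and, this, countNeBelow]

lemma card_fixedPointsAt_of_mem {g : Fin (m + 1) → β} {i : β} {a : Fin (m + 1)}
    (ha : a ∈ fixedPointsAt g i) :
    #(fixedPointsAt g i) = #(fixedPointsAt (a.removeNth g) i) + 1 := by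
  have hga : g a = i := (mem_fixedPointsAt.1 ha).1
  rw [← Fin.insertNth_self_removeNth a g, hga] at ha ⊢
  rw [← filter_univ_mem (fixedPointsAt _ i), Fin.card_filter_univ_succAbove a, if_pos ha]
  simp only [succAbove_mem_fixedPointsAt_insertNth, filter_univ_mem, Fin.removeNth_insertNth]
  ring

/-- The slots `a` at which inserting `i` into `h` creates a fixed point at `a`
(see `self_mem_fixedPointsAt_insertNth`). -/
def insertionSlots (h : Fin m → β) (i : β) : Finset (Fin (m + 1)) :=
  {a | countNeBelow h i a = countLt h i}

lemma mem_insertionSlots {h : Fin m → β} {i : β} {a : Fin (m + 1)} :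
    a ∈ insertionSlots h i ↔ countNeBelow h i a = countLt h i := by
  simp [insertionSlots]

lemma insertionSlots_nonempty (h : Fin m → β) (i : β) : (insertionSlots h i).Nonempty := by
  have hstep (k : ℕ) (hk : k < m) : countNeBelow h i (k + 1) ≤ countNeBelow h i k + 1 := by
    have := countNeBelow_succ h i ⟨k, hk⟩
    dsimp only at this
    split_ifs at this <;> omega
  have hm : countLt h i ≤ countNeBelow h i m := card_le_card fun y hy => by
    simp only [mem_filter_univ] at hy ⊢
    exact ⟨y.isLt, hy.ne⟩
  obtain ⟨k, hk, hfk⟩ := Nat.exists_eq_of_succ_le_add_one hstep (by simp [countNeBelow]) hm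
  exact ⟨⟨k, by omega⟩, mem_insertionSlots.2 hfk⟩

lemma isLeast_fixedPointsAt_insertNth_iff {a : Fin (m + 1)} {i : β} {h : Fin m → β} :
    IsLeast (fixedPointsAt (a.insertNth i h) i : Set (Fin (m + 1))) a ↔
      IsLeast (insertionSlots h i : Set (Fin (m + 1))) a := by
  have hmem : a ∈ fixedPointsAt (a.insertNth i h) i ↔ a ∈ insertionSlots h i := by
    rw [self_mem_fixedPointsAt_insertNth, mem_insertionSlots]
  simp only [IsLeast, lowerBounds, mem_coe, Set.mem_ofPred_eq, hmem]
  refine and_congr_right fun ha => ⟨fun hfix b hb => ?_, fun hslot b hb => ?_⟩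
  · by_contra! hba
    obtain ⟨z, rfl⟩ := Fin.exists_succ_eq.2 (Fin.ne_zero_of_lt hba)
    rw [mem_insertionSlots, Fin.val_succ] at ha
    -- the count is constant on the slots `b ≤ z < z + 1 = a`, so `z` is a fixed point before `a`
    have hz : countNeBelow h i z = countLt h i :=
      le_antisymm (ha ▸ countNeBelow_mono h i (Nat.le_succ z))
        (mem_insertionSlots.1 hb ▸ countNeBelow_mono h i (Nat.lt_succ_iff.1 hba))
    have hzi : h z = i := by
      by_contra hne
      have := countNeBelow_succ h i z
      rw [if_neg hne] at this
      omega
    have hfz := hfix (succAbove_mem_fixedPointsAt_insertNth.2 (mem_fixedPointsAt.2 ⟨hzi, hz⟩))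
    rw [Fin.succAbove_of_castSucc_lt _ _ Fin.castSucc_lt_succ] at hfz
    exact hfz.not_gt Fin.castSucc_lt_succ
  · by_contra! hba
    obtain ⟨z, rfl⟩ := Fin.exists_succAbove_eq hba.ne
    rw [succAbove_mem_fixedPointsAt_insertNth, mem_fixedPointsAt] at hb
    rw [Fin.succAbove_of_castSucc_lt _ _ ((Fin.succAbove_lt_iff_castSucc_lt _ _).1 hba)] at hba
    exact (hslot (mem_insertionSlots.2 hb.2)).not_gt hba

lemma le_card_fixedPointsAt_and_isLeast_iff {g : Fin (m + 1) → β} {i : β} {a : Fin (m + 1)}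
    {l : ℕ} :
    l + 1 ≤ #(fixedPointsAt g i) ∧ IsLeast (fixedPointsAt g i : Set (Fin (m + 1))) a ↔
      g a = i ∧ l ≤ #(fixedPointsAt (a.removeNth g) i) ∧
        IsLeast (insertionSlots (a.removeNth g) i : Set (Fin (m + 1))) a := by
  constructor
  · rintro ⟨hl, hleast⟩
    have hga : g a = i := (mem_fixedPointsAt.1 hleast.1).1
    refine ⟨hga, by rw [card_fixedPointsAt_of_mem hleast.1] at hl; omega, ?_⟩
    have := hleast
    rwa [← Fin.insertNth_self_removeNth a g, hga, isLeast_fixedPointsAt_insertNth_iff] at this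
  · rintro ⟨hga, hl, hslot⟩
    have hleast : IsLeast (fixedPointsAt g i : Set (Fin (m + 1))) a := by
      rwa [← Fin.insertNth_self_removeNth a g, hga, isLeast_fixedPointsAt_insertNth_iff]
    exact ⟨by rw [card_fixedPointsAt_of_mem hleast.1]; omega, hleast⟩

theorem pi_le_card_fixedPointsAt_of_countable [MeasurableSpace β] [Countable β]
    [MeasurableSingletonClass β] (ν : Measure β) [IsProbabilityMeasure ν] (i : β) :
    ∀ {n l : ℕ}, l ≤ n →
      Measure.pi (fun _ : Fin n => ν) {g | l ≤ #(fixedPointsAt g i)} = ν {i} ^ l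
  | _, 0, _ => by simp
  | 0, _ + 1, hl => absurd hl (by omega)
  | m + 1, l + 1, hl => by
    calc Measure.pi (fun _ => ν) {g : Fin (m + 1) → β | l + 1 ≤ #(fixedPointsAt g i)}
        = ∑ a, Measure.pi (fun _ => ν) {g : Fin (m + 1) → β | l + 1 ≤ #(fixedPointsAt g i) ∧
            IsLeast (fixedPointsAt g i : Set (Fin (m + 1))) a} :=
          measure_eq_sum_measure_isLeast _ (fixedPointsAt · i) fun g hg => card_pos.1 (by omega)
      _ = ∑ a, Measure.pi (fun _ => ν) {g : Fin (m + 1) → β | g a = i ∧ a.removeNth g ∈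
            {h | l ≤ #(fixedPointsAt h i) ∧
              IsLeast (insertionSlots h i : Set (Fin (m + 1))) a}} := by
          simp only [le_card_fixedPointsAt_and_isLeast_iff, Set.mem_ofPred_eq]
      _ = ν {i} * Measure.pi (fun _ => ν) {h : Fin m → β | l ≤ #(fixedPointsAt h i)} := by
          simp only [Measure.pi_setOf_apply_eq_and_removeNth_mem, ← mul_sum]
          rw [measure_eq_sum_measure_isLeast _ (insertionSlots · i)
            fun h _ => insertionSlots_nonempty h i]
      _ = ν {i} ^ (l + 1) := by rw [pi_le_card_fixedPointsAt_of_countable ν i (by omega), pow_succ']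

/-- Coding by comparison with `i` into a finite alphabet makes every event about the coded
sample measurable. -/
def cmpFin3 (i r : β) : Fin 3 := if r < i then 0 else if r = i then 1 else 2

lemma cmpFin3_self (i : β) : cmpFin3 i i = 1 := by simp [cmpFin3]

lemma cmpFin3_lt_cmpFin3_self_iff {i r : β} : cmpFin3 i r < cmpFin3 i i ↔ r < i := by
  rcases lt_trichotomy r i with h | rfl | h
  · simp [cmpFin3, h]
  · simp [cmpFin3]
  · simp [cmpFin3, h.not_gt, h.ne']

lemma cmpFin3_eq_cmpFin3_self_iff {i r : β} : cmpFin3 i r = cmpFin3 i i ↔ r = i := by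
  rcases lt_trichotomy r i with h | rfl | h
  · simp [cmpFin3, h, h.ne]
  · simp [cmpFin3]
  · simp [cmpFin3, h.not_gt, h.ne']

lemma preimage_cmpFin3_one (i : β) : cmpFin3 i ⁻¹' {1} = {i} := by
  ext r
  simpa [← cmpFin3_self i] using cmpFin3_eq_cmpFin3_self_iff

lemma setOf_le_card_fixedPointsAt_eq_preimage (i : β) (l : ℕ) :
    {g : Fin n → β | l ≤ #(fixedPointsAt g i)} =
      (fun g y => cmpFin3 i (g y)) ⁻¹' {v | l ≤ #(fixedPointsAt v 1)} := by
  ext g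
  change _ ↔ l ≤ #(fixedPointsAt (cmpFin3 i ∘ g) 1)
  rw [← cmpFin3_self i, fixedPointsAt_comp (fun _ => cmpFin3_lt_cmpFin3_self_iff)
    (fun _ => cmpFin3_eq_cmpFin3_self_iff)]
  rfl

variable [MeasurableSpace β] {i : β}

lemma measurable_cmpFin3 (hIio : MeasurableSet (Set.Iio i)) (hi : MeasurableSet {i}) :
    Measurable (cmpFin3 i) :=
  measurable_const.ite hIio (measurable_const.ite hi measurable_const)

lemma measurable_cmpFin3_comp (hIio : MeasurableSet (Set.Iio i)) (hi : MeasurableSet {i}) :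
    Measurable fun (g : Fin n → β) y => cmpFin3 i (g y) :=
  measurable_pi_lambda _ fun y => (measurable_cmpFin3 hIio hi).comp (measurable_pi_apply y)

lemma measurableSet_setOf_le_card_fixedPointsAt (hIio : MeasurableSet (Set.Iio i))
    (hi : MeasurableSet {i}) (l : ℕ) : MeasurableSet {g : Fin n → β | l ≤ #(fixedPointsAt g i)} :=
  setOf_le_card_fixedPointsAt_eq_preimage i l ▸ measurable_cmpFin3_comp hIio hi .of_discrete

theorem pi_le_card_fixedPointsAt (ν : Measure β) [IsProbabilityMeasure ν]
    (hIio : MeasurableSet (Set.Iio i)) (hi : MeasurableSet {i}) {l : ℕ} (hl : l ≤ n) :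
    Measure.pi (fun _ : Fin n => ν) {g | l ≤ #(fixedPointsAt g i)} = ν {i} ^ l := by
  have hcode := measurable_cmpFin3 hIio hi
  have := Measure.isProbabilityMeasure_map (μ := ν) hcode.aemeasurable
  rw [setOf_le_card_fixedPointsAt_eq_preimage,
    ← Measure.map_apply (measurable_cmpFin3_comp hIio hi) .of_discrete,
    Measure.pi_map_pi fun _ => hcode.aemeasurable, pi_le_card_fixedPointsAt_of_countable _ _ hl,
    Measure.map_apply hcode (measurableSet_singleton 1), preimage_cmpFin3_one]

end FixedPoints

theorem stmt7_general {Ω : Type*} [MeasurableSpace Ω] (P : Measure Ω) [IsProbabilityMeasure P]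
    (μ : Measure ℝ) [IsProbabilityMeasure μ]
    (n : ℕ) (G : Fin n → Ω → ℝ) (hmeas : ∀ x, Measurable (G x))
    (hindep : iIndepFun G P)
    (hdist : ∀ x, Measure.map (G x) P = μ)
    (std : (Fin n → ℝ) → Equiv.Perm (Fin n))
    (hstd : ∀ (g : Fin n → ℝ) (j k : Fin n),
      std g j < std g k ↔ (g j < g k ∨ (g j = g k ∧ j < k)))
    (i : ℝ) :
    (∀ ω : Ω,
      Set.ncard {x : Fin n | std (fun y => G y ω) x = x ∧ G x ω = i} ≤ n) ∧
    ∀ l : ℕ, l ≤ n →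
      P {ω | l ≤ Set.ncard {x : Fin n | std (fun y => G y ω) x = x ∧ G x ω = i}} =
        μ {i} ^ l := by
  refine ⟨fun ω => (Set.ncard_le_card _).trans_eq (Nat.card_fin n), fun l hl => ?_⟩
  have hsample : P.map (fun ω y => G y ω) = Measure.pi fun _ => μ := by
    rw [(iIndepFun_iff_map_fun_eq_pi_map fun x => (hmeas x).aemeasurable).1 hindep]
    simp_rw [hdist]
  calc P {ω | l ≤ Set.ncard {x : Fin n | std (fun y => G y ω) x = x ∧ G x ω = i}}
      = P.map (fun ω y => G y ω) {g | l ≤ #(fixedPointsAt g i)} := by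
        rw [Measure.map_apply (measurable_pi_lambda _ hmeas)
          (measurableSet_setOf_le_card_fixedPointsAt measurableSet_Iio
            (measurableSet_singleton i) l)]
        simp only [Set.preimage_ofPred_eq, ncard_setOf_apply_eq_self_and_eq (hstd _)]
    _ = μ {i} ^ l := by
        rw [hsample, pi_le_card_fixedPointsAt μ measurableSet_Iio (measurableSet_singleton i) hl]

/-- let `G = (G_1, …, G_n)` be i.i.d. random variables with values in the
countable set `𝕀 ⊆ ℝ` and common distribution `μ`, with `p_i = μ {i}`. For `i ∈ 𝕀`, the number
`D_i` of fixed points `x` of `std(G)` with `G_x = i` has the distribution of `min(X, n)` with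
`X ∼ Geo₀(1 - p_i)`: `D_i ≤ n` almost surely (here: surely) and `P(D_i ≥ l) = p_i ^ l` for every
`0 ≤ l ≤ n`. -/
theorem stmt7 {Ω : Type*} [MeasurableSpace Ω] (P : Measure Ω) [IsProbabilityMeasure P]
    (𝕀 : Set ℝ) (h𝕀 : 𝕀.Countable)
    (μ : Measure ℝ) [IsProbabilityMeasure μ] (hμ : μ 𝕀ᶜ = 0)
    (n : ℕ) (G : Fin n → Ω → ℝ) (hmeas : ∀ x, Measurable (G x))
    (hindep : iIndepFun G P)
    (hdist : ∀ x, Measure.map (G x) P = μ)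
    (std : (Fin n → ℝ) → Equiv.Perm (Fin n))
    (hstd : ∀ (g : Fin n → ℝ) (j k : Fin n),
      std g j < std g k ↔ (g j < g k ∨ (g j = g k ∧ j < k)))
    (i : ℝ) (hi : i ∈ 𝕀) :
    (∀ ω : Ω,
      Set.ncard {x : Fin n | std (fun y => G y ω) x = x ∧ G x ω = i} ≤ n) ∧
    ∀ l : ℕ, l ≤ n →
      P {ω | l ≤ Set.ncard {x : Fin n | std (fun y => G y ω) x = x ∧ G x ω = i}} =
        μ {i} ^ l :=
  stmt7_general P μ n G hmeas hindep hdist std hstd i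
end

section
/- Let x be a primitive word over an alphabet A. If x = uv where u and v are both nonempty words, then the word vu is different from x. -/
/-- A word (finite list) is primitive if it is not a nontrivial power `y^m`, `m ≥ 2`,
of another word. -/
def IsPrimitiveWord {α : Type*} (w : List α) : Prop :=
  ¬ ∃ (y : List α) (m : ℕ), 2 ≤ m ∧ w = (List.replicate m y).flatten

lemma flatten_replicate_add {α : Type*} (z : List α) (i j : ℕ) :
    (List.replicate (i + j) z).flatten =
      (List.replicate i z).flatten ++ (List.replicate j z).flatten := by
  rw [List.replicate_add, List.flatten_append]

lemma comm_words {α : Type*} : ∀ (n : ℕ) (u v : List α),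
    u.length + v.length ≤ n → u ++ v = v ++ u →
    ∃ (z : List α) (i j : ℕ), u = (List.replicate i z).flatten ∧
      v = (List.replicate j z).flatten := by
  intro n
  induction n with
  | zero =>
    intro u v hlen _
    have hu : u = [] := List.eq_nil_of_length_eq_zero (by omega)
    have hv : v = [] := List.eq_nil_of_length_eq_zero (by omega)
    exact ⟨[], 0, 0, by simp [hu, hv]⟩
  | succ n ih =>
    intro u v hlen heq
    rcases eq_or_ne u [] with rfl | hu
    · exact ⟨v, 0, 1, by simp⟩
    rcases eq_or_ne v [] with rfl | hv
    · exact ⟨u, 1, 0, by simp⟩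
    -- WLOG u.length ≤ v.length
    rcases le_total u.length v.length with hle | hle
    · have hpre : u <+: v := by
        have h1 : u <+: v ++ u := heq ▸ List.prefix_append u v
        exact (List.prefix_of_prefix_length_le h1 (List.prefix_append v u) hle)
      obtain ⟨w, rfl⟩ := hpre
      have heq' : u ++ w = w ++ u := by
        have : u ++ (u ++ w) = u ++ (w ++ u) := by
          simpa [List.append_assoc] using heq
        exact List.append_cancel_left this
      have hlen' : u.length + w.length ≤ n := by
        have hul : 0 < u.length := List.length_pos_iff.mpr hu
        simp [List.length_append] at hlen
        omega
      obtain ⟨z, i, j, hu', hw'⟩ := ih u w hlen' heq'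
      exact ⟨z, i, i + j, hu', by rw [flatten_replicate_add, ← hu', ← hw']⟩
    · have hpre : v <+: u := by
        have h1 : v <+: u ++ v := heq ▸ List.prefix_append v u
        exact (List.prefix_of_prefix_length_le h1 (List.prefix_append u v) hle)
      obtain ⟨w, rfl⟩ := hpre
      have heq' : v ++ w = w ++ v := by
        have : v ++ (v ++ w) = v ++ (w ++ v) := by
          simpa [List.append_assoc] using heq.symm
        exact List.append_cancel_left this
      have hlen' : v.length + w.length ≤ n := by
        have hvl : 0 < v.length := List.length_pos_iff.mpr hv
        simp [List.length_append] at hlen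
        omega
      obtain ⟨z, i, j, hv', hw'⟩ := ih v w hlen' heq'
      exact ⟨z, i + j, i, by rw [flatten_replicate_add, ← hv', ← hw'], hv'⟩

/-- if `x = u ++ v` is primitive with `u, v` nonempty, then `v ++ u ≠ u ++ v`. -/
theorem stmt9 {α : Type*} (u v : List α) (hprim : IsPrimitiveWord (u ++ v))
    (hu : u ≠ []) (hv : v ≠ []) : v ++ u ≠ u ++ v := by
  intro heq
  obtain ⟨z, i, j, hu', hv'⟩ :=
    comm_words (u.length + v.length) u v le_rfl heq.symm
  have hi : 1 ≤ i := by
    rcases Nat.eq_zero_or_pos i with rfl | h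
    · simp at hu'; exact absurd hu' hu
    · exact h
  have hj : 1 ≤ j := by
    rcases Nat.eq_zero_or_pos j with rfl | h
    · simp at hv'; exact absurd hv' hv
    · exact h
  exact hprim ⟨z, i + j, by omega, by rw [flatten_replicate_add, ← hu', ← hv']⟩
end

section
/- Let (p_i)_{i∈𝕀} be a non-degenerate probability distribution on a countable set 𝕀 (i.e., not concentrated on a single point) and let G_1, G_2, … be i.i.d. with this distribution. Then P((G_1,…,G_k) is a primitive word) → 1 as k → ∞, and more generally, for every fixed l ≥ 1, Σ_{i ∈ Q_k} (p_{i_1} ⋯ p_{i_k})^l is asymptotically equivalent, as k → ∞, to Σ_{i ∈ 𝕀^k} (p_{i_1} ⋯ p_{i_k})^l = (Σ_{i∈𝕀} p_i^l)^k = ‖p‖_l^{lk}. -/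
open MeasureTheory ProbabilityTheory Filter Topology
open scoped ENNReal

/-!
Give each letter `a` a weight `q a`, with total weight `1` on the alphabet, and a word the
product of the weights of its letters; the words of length `k` then have total weight `1`.
A non-primitive word of length `k > 0` is `y ^ (k / d)` for a proper divisor `d` of `k` and a word
`y` of length `d`. If two distinct letters have positive weight, every letter has weight at most
some `ρ ^ 2 < 1`, so the weight of `y ^ (k / d)` is at most `ρ ^ k` times that of `y`, and the
non-primitive words of length `k` weigh at most `k * ρ ^ k → 0`. The weights `p_i ^ l` are brought
to total weight `1` by dividing by `‖p‖_l ^ l`. For `l = 1` the weight of a word is the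
probability that `(G_1, …, G_k)` spells it, so `P(primitive)` is at least the weight of the
primitive words.
-/

section Words

variable {α : Type*}

def wordsOfLength (s : Set α) (k : ℕ) : Set (List α) :=
  {w | w.length = k ∧ ∀ a ∈ w, a ∈ s}

-- `Q_k` over `s`, written so that its coercion to a type is literally the subtype in `stmt12`.
def primitiveWords (s : Set α) (k : ℕ) : Set (List α) :=
  {w | w.length = k ∧ IsPrimitiveWord w ∧ ∀ a ∈ w, a ∈ s}

theorem primitiveWords_subset_wordsOfLength (s : Set α) (k : ℕ) :
    primitiveWords s k ⊆ wordsOfLength s k :=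
  fun _ hw => ⟨hw.1, hw.2.2⟩

theorem wordsOfLength_subset_primitiveWords_union (s : Set α) (k : ℕ) :
    wordsOfLength s k ⊆ primitiveWords s k ∪ (wordsOfLength s k \ {w | IsPrimitiveWord w}) := by
  intro w hw
  by_cases hprim : IsPrimitiveWord w
  · exact Or.inl ⟨hw.1, hprim, hw.2⟩
  · exact Or.inr ⟨hw, hprim⟩

-- The empty word is `[]` repeated twice, so it is not primitive.
theorem wordsOfLength_diff_subset_biUnion {s : Set α} {k : ℕ} (hk : 0 < k) :
    wordsOfLength s k \ {w | IsPrimitiveWord w} ⊆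
      ⋃ d ∈ k.properDivisors,
        (fun y => (List.replicate (k / d) y).flatten) '' wordsOfLength s d := by
  rintro _ ⟨⟨hlen, hmem⟩, hprim⟩
  obtain ⟨y, m, hm, rfl⟩ := not_not.mp hprim
  have hk' : m * y.length = k := by simpa [List.length_flatten, List.sum_replicate] using hlen
  have hy : 0 < y.length := Nat.pos_of_ne_zero fun h => by simp [h] at hk'; omega
  refine Set.mem_biUnion (x := y.length) ?_ ⟨y, ⟨rfl, fun a ha => hmem a ?_⟩, ?_⟩
  · exact Nat.mem_properDivisors.2 ⟨⟨m, by rw [← hk', mul_comm]⟩, by nlinarith⟩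
  · exact List.mem_flatten.2 ⟨y, List.mem_replicate.2 ⟨by omega, rfl⟩, ha⟩
  · simp only [← hk', Nat.mul_div_cancel _ hy]

theorem countable_primitiveWords {s : Set α} (hs : s.Countable) (k : ℕ) :
    (primitiveWords s k).Countable := by
  have := hs.to_subtype
  refine (Set.countable_range (List.map ((↑) : s → α))).mono ?_
  rw [Set.range_list_map_coe]
  exact fun w hw => hw.2.2

def wordsOfLengthSuccEquiv (s : Set α) (k : ℕ) :
    s × wordsOfLength s k ≃ wordsOfLength s (k + 1) where
  toFun x := ⟨x.1.1 :: x.2.1, by simp [x.2.2.1], by simpa [x.1.2] using x.2.2.2⟩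
  invFun
    | ⟨a :: v, hv⟩ => (⟨a, hv.2 a List.mem_cons_self⟩,
        ⟨v, by simpa using hv.1, fun b hb => hv.2 b (List.mem_cons_of_mem a hb)⟩)
  left_inv _ := rfl
  right_inv
    | ⟨_ :: _, _⟩ => rfl

theorem tsum_wordsOfLength (q : α → ℝ≥0∞) (s : Set α) (k : ℕ) :
    ∑' w : wordsOfLength s k, (w.1.map q).prod = (∑' a : s, q a) ^ k := by
  induction k with
  | zero =>
    have hnil : wordsOfLength s 0 = {[]} := by
      ext w; simpa [wordsOfLength] using fun h : w = [] => by simp [h]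
    rw [hnil, tsum_singleton (f := fun w : List α => (w.map q).prod), List.map_nil,
      List.prod_nil, pow_zero]
  | succ k ih =>
    rw [← (wordsOfLengthSuccEquiv s k).tsum_eq, ENNReal.tsum_prod', pow_succ', ← ih,
      ← ENNReal.tsum_mul_right]
    exact tsum_congr fun a => by simp [wordsOfLengthSuccEquiv, ← ENNReal.tsum_mul_left]

theorem tsum_primitiveWords_div_pow (q : α → ℝ≥0∞) (c : ℝ≥0∞) (s : Set α) (k : ℕ) :
    (∑' w : primitiveWords s k, (w.1.map q).prod) / c ^ k =
      ∑' w : primitiveWords s k, (w.1.map fun a => q a / c).prod := by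
  simp_rw [div_eq_mul_inv, ← ENNReal.tsum_mul_right, ENNReal.inv_pow]
  refine tsum_congr fun w => ?_
  rw [List.prod_map_mul, List.map_const', List.prod_replicate, w.2.1]

theorem ENNReal.tendsto_natCast_mul_pow_atTop_nhds_zero {ρ : ℝ≥0∞} (hρ : ρ < 1) :
    Tendsto (fun k : ℕ => (k : ℝ≥0∞) * ρ ^ k) atTop (𝓝 0) := by
  have hρ' : ρ = ENNReal.ofReal ρ.toReal := (ENNReal.ofReal_toReal hρ.ne_top).symm
  have hlim := ENNReal.tendsto_ofReal (tendsto_self_mul_const_pow_of_lt_one ENNReal.toReal_nonneg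
    (ENNReal.toReal_lt_of_lt_ofReal (by simpa using hρ)))
  rw [ENNReal.ofReal_zero] at hlim
  refine hlim.congr fun k => ?_
  rw [ENNReal.ofReal_mul (Nat.cast_nonneg k), ENNReal.ofReal_natCast,
    ENNReal.ofReal_pow ENNReal.toReal_nonneg, ← hρ']

theorem ENNReal.list_prod_map_ne_top {f : α → ℝ≥0∞} (hf : ∀ a, f a ≠ ∞) (w : List α) :
    (w.map f).prod ≠ ∞ := by
  induction w with
  | nil => simp
  | cons a w ih => simpa using ENNReal.mul_ne_top (hf a) ih

theorem ENNReal.toReal_list_prod_map_pow (f : α → ℝ≥0∞) (l : ℕ) (w : List α) :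
    ((w.map fun a => f a ^ l).prod).toReal = ((w.map fun a => (f a).toReal).prod) ^ l := by
  induction w with
  | nil => simp
  | cons a w ih => simp [ih, mul_pow]

theorem ENNReal.toReal_tsum_div_tsum_pow {s : Set α} {f : α → ℝ≥0∞} (hf : ∀ a, f a ≠ ∞)
    (l k : ℕ) (S : Set (List α)) :
    ((∑' w : S, (w.1.map fun a => f a ^ l).prod) / (∑' a : s, f a ^ l) ^ k).toReal =
      (∑' w : S, ((w.1.map fun a => (f a).toReal).prod) ^ l) /
        (∑' a : s, (f a).toReal ^ l) ^ k := by
  have hfl : ∀ a, f a ^ l ≠ ∞ := fun a => ENNReal.pow_ne_top (hf a)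
  rw [ENNReal.toReal_div, ENNReal.toReal_pow,
    ENNReal.tsum_toReal_eq fun w : S => ENNReal.list_prod_map_ne_top hfl w.1,
    ENNReal.tsum_toReal_eq fun a : s => hfl a]
  simp only [ENNReal.toReal_list_prod_map_pow, ENNReal.toReal_pow]

section Weights

variable {s : Set α} {q : α → ℝ≥0∞}

theorem prod_map_flatten_replicate_le {ρ : ℝ≥0∞} (hρ : ρ ≤ 1) (hq : ∀ a ∈ s, q a ≤ ρ ^ 2)
    {k d : ℕ} (hd : d ∈ k.properDivisors) {y : List α} (hy : y ∈ wordsOfLength s d) :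
    ((List.replicate (k / d) y).flatten.map q).prod ≤ ρ ^ k * (y.map q).prod := by
  obtain ⟨⟨m, rfl⟩, hdk⟩ := Nat.mem_properDivisors.1 hd
  have hd0 : 0 < d := Nat.pos_of_ne_zero fun h => by simp [h] at hdk
  have hm : 2 ≤ m := by nlinarith
  have hy_le : (y.map q).prod ≤ (ρ ^ 2) ^ d := by
    simpa [hy.1] using List.prod_le_pow_card (y.map q) (ρ ^ 2)
      (by simpa using fun a ha => hq a (hy.2 a ha))
  rw [Nat.mul_div_cancel_left _ hd0]
  simp only [List.map_flatten, List.prod_flatten, List.map_replicate, List.prod_replicate]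
  rw [← pow_sub_one_mul (by omega)]
  gcongr ?_ * _
  calc (y.map q).prod ^ (m - 1) ≤ ((ρ ^ 2) ^ d) ^ (m - 1) := by gcongr
    _ = ρ ^ (2 * (d * (m - 1))) := by rw [← pow_mul, ← pow_mul]
    _ ≤ ρ ^ (d * m) := pow_le_pow_right_of_le_one' hρ (by
      obtain ⟨n, rfl⟩ : ∃ n, m = n + 2 := ⟨m - 2, by omega⟩
      rw [show n + 2 - 1 = n + 1 by omega]
      nlinarith)

theorem tsum_wordsOfLength_diff_le {ρ : ℝ≥0∞} (hρ : ρ ≤ 1) (hq : ∀ a ∈ s, q a ≤ ρ ^ 2)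
    (hsum : ∑' a : s, q a ≤ 1) {k : ℕ} (hk : 0 < k) :
    ∑' w : ↥(wordsOfLength s k \ {w | IsPrimitiveWord w}), (w.1.map q).prod ≤ k * ρ ^ k := by
  calc ∑' w : ↥(wordsOfLength s k \ {w | IsPrimitiveWord w}), (w.1.map q).prod
      ≤ ∑' w : ↥(⋃ d ∈ k.properDivisors,
          (fun y => (List.replicate (k / d) y).flatten) '' wordsOfLength s d), (w.1.map q).prod :=
        ENNReal.tsum_mono_subtype (fun w : List α => (w.map q).prod)
          (wordsOfLength_diff_subset_biUnion hk)
    _ ≤ ∑ d ∈ k.properDivisors, ∑' w : ↥((fun y => (List.replicate (k / d) y).flatten) ''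
          wordsOfLength s d), (w.1.map q).prod :=
        ENNReal.tsum_biUnion_le (fun w : List α => (w.map q).prod) _ _
    _ ≤ ∑ d ∈ k.properDivisors, ∑' y : wordsOfLength s d,
          ((List.replicate (k / d) y.1).flatten.map q).prod := by
        gcongr with d
        exact ENNReal.tsum_le_tsum_comp_of_surjective Set.imageFactorization_surjective _
    _ ≤ ∑ d ∈ k.properDivisors, ∑' y : wordsOfLength s d, ρ ^ k * (y.1.map q).prod := by
        gcongr with d hd y
        exact prod_map_flatten_replicate_le hρ hq hd y.2
    _ ≤ ∑ _d ∈ k.properDivisors, ρ ^ k := by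
        gcongr with d
        rw [ENNReal.tsum_mul_left, tsum_wordsOfLength]
        exact mul_le_of_le_one_right' (pow_le_one' hsum d)
    _ ≤ k * ρ ^ k := by
        rw [Finset.sum_const, nsmul_eq_mul]
        gcongr
        exact_mod_cast (Finset.card_filter_le _ _).trans (by simp)

theorem exists_pair_ne_zero_of_tsum_eq_one (hsum : ∑' a : s, q a = 1) (hq : ∀ a ∈ s, q a ≠ 1) :
    ∃ b ∈ s, ∃ c ∈ s, b ≠ c ∧ q b ≠ 0 ∧ q c ≠ 0 := by
  obtain ⟨b, hb⟩ : ∃ b : s, q b ≠ 0 := by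
    by_contra! h
    simp [h] at hsum
  obtain ⟨c, hcb, hc⟩ : ∃ c : s, c ≠ b ∧ q c ≠ 0 := by
    by_contra! h
    exact hq b b.2 (by rwa [tsum_eq_single b fun c hc => h c hc] at hsum)
  exact ⟨b, b.2, c, c.2, fun h => hcb (Subtype.ext h.symm), hb, hc⟩

theorem exists_lt_one_forall_le (hsum : ∑' a : s, q a = 1) {b c : α} (hb : b ∈ s) (hc : c ∈ s)
    (hbc : b ≠ c) (hqb : q b ≠ 0) (hqc : q c ≠ 0) : ∃ θ < 1, ∀ a ∈ s, q a ≤ θ := by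
  have hpair : ∀ a ∈ s, ∀ a' ∈ s, a ≠ a' → q a ≤ 1 - q a' := fun a ha a' ha' hne => by
    have hle : q a + q a' ≤ 1 := by
      classical
      rw [← hsum, ← Finset.sum_pair (f := fun x : s => q x) (a := ⟨a, ha⟩) (b := ⟨a', ha'⟩)
        (by simpa using hne)]
      exact ENNReal.sum_le_tsum _
    exact ENNReal.le_sub_of_add_le_right
      (ne_top_of_le_ne_top ENNReal.one_ne_top (le_add_self.trans hle)) hle
  refine ⟨1 - min (q b) (q c),
    ENNReal.sub_lt_self ENNReal.one_ne_top one_ne_zero (by simp [hqb, hqc]), fun a ha => ?_⟩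
  rcases eq_or_ne a b with rfl | hab
  · exact (hpair a ha c hc hbc).trans (tsub_le_tsub_left (min_le_right _ _) _)
  · exact (hpair a ha b hb hab).trans (tsub_le_tsub_left (min_le_left _ _) _)

theorem tendsto_tsum_primitiveWords (hsum : ∑' a : s, q a = 1) {b c : α} (hb : b ∈ s)
    (hc : c ∈ s) (hbc : b ≠ c) (hqb : q b ≠ 0) (hqc : q c ≠ 0) :
    Tendsto (fun k => ∑' w : primitiveWords s k, (w.1.map q).prod) atTop (𝓝 1) := by
  obtain ⟨θ, hθ, hq⟩ := exists_lt_one_forall_le hsum hb hc hbc hqb hqc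
  set ρ := θ ^ (1 / 2 : ℝ)
  have hρ : ρ < 1 := ENNReal.rpow_lt_one hθ (by norm_num)
  have hρθ : ρ ^ 2 = θ := by
    rw [← ENNReal.rpow_natCast, ← ENNReal.rpow_mul]; norm_num
  set T := fun k => ∑' w : primitiveWords s k, (w.1.map q).prod
  set N := fun k => ∑' w : ↥(wordsOfLength s k \ {w | IsPrimitiveWord w}), (w.1.map q).prod
  have hW : ∀ k, ∑' w : wordsOfLength s k, (w.1.map q).prod = 1 := fun k => by
    rw [tsum_wordsOfLength, hsum, one_pow]
  have hT : ∀ k, T k ≤ 1 := fun k =>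
    (ENNReal.tsum_mono_subtype (fun w : List α => (w.map q).prod)
      (primitiveWords_subset_wordsOfLength s k)).trans_eq (hW k)
  have hTN : ∀ k, 1 ≤ T k + N k := fun k =>
    calc 1 = ∑' w : wordsOfLength s k, (w.1.map q).prod := (hW k).symm
      _ ≤ ∑' w : ↥(primitiveWords s k ∪ (wordsOfLength s k \ {w | IsPrimitiveWord w})),
          (w.1.map q).prod :=
        ENNReal.tsum_mono_subtype (fun w : List α => (w.map q).prod)
          (wordsOfLength_subset_primitiveWords_union s k)
      _ ≤ T k + N k := ENNReal.tsum_union_le (fun w : List α => (w.map q).prod) _ _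
  have hN : Tendsto N atTop (𝓝 0) :=
    tendsto_of_tendsto_of_tendsto_of_le_of_le' tendsto_const_nhds
      (ENNReal.tendsto_natCast_mul_pow_atTop_nhds_zero hρ) (Eventually.of_forall fun _ => zero_le)
      ((eventually_gt_atTop 0).mono fun k hk =>
        tsum_wordsOfLength_diff_le hρ.le (hρθ ▸ hq) hsum.le hk)
  have hlow : Tendsto (fun k => 1 - N k) atTop (𝓝 1) := by
    simpa using ENNReal.Tendsto.sub tendsto_const_nhds hN (Or.inl ENNReal.one_ne_top)
  exact tendsto_of_tendsto_of_tendsto_of_le_of_le hlow tendsto_const_nhds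
    (fun k => tsub_le_iff_right.2 (hTN k)) hT

theorem tendsto_tsum_primitiveWords_div_pow (hsum : ∑' a : s, q a ≠ ∞) {b c : α} (hb : b ∈ s)
    (hc : c ∈ s) (hbc : b ≠ c) (hqb : q b ≠ 0) (hqc : q c ≠ 0) :
    Tendsto (fun k => (∑' w : primitiveWords s k, (w.1.map q).prod) / (∑' a : s, q a) ^ k)
      atTop (𝓝 1) := by
  have hS0 : ∑' a : s, q a ≠ 0 := fun h => hqb (ENNReal.tsum_eq_zero.1 h ⟨b, hb⟩)
  simp_rw [tsum_primitiveWords_div_pow]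
  refine tendsto_tsum_primitiveWords ?_ hb hc hbc (ENNReal.div_pos hqb hsum).ne'
    (ENNReal.div_pos hqc hsum).ne'
  simp_rw [div_eq_mul_inv, ENNReal.tsum_mul_right, ENNReal.mul_inv_cancel hS0 hsum]

end Weights

end Words

theorem preimage_ofFn_singleton_ofFn {Ω β : Type*} (G : ℕ → Ω → β) {k : ℕ} (v : Fin k → β) :
    (fun ω => List.ofFn fun j : Fin k => G j ω) ⁻¹' {List.ofFn v} =
      ⋂ j : Fin k, G j ⁻¹' {v j} := by
  ext ω
  simp [List.ofFn_inj, funext_iff]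

section RandomWords

variable {Ω β : Type*} [MeasurableSpace Ω] [MeasurableSpace β] [MeasurableSingletonClass β]
  {P : Measure Ω} {μ : Measure β} {G : ℕ → Ω → β}

theorem measure_preimage_ofFn_singleton (hmeas : ∀ j, Measurable (G j))
    (hindep : iIndepFun G P) (hdist : ∀ j, P.map (G j) = μ) {k : ℕ} (v : Fin k → β) :
    P ((fun ω => List.ofFn fun j : Fin k => G j ω) ⁻¹' {List.ofFn v}) =
      ((List.ofFn v).map fun a => μ {a}).prod := by
  have hprod := (hindep.precomp Fin.val_injective).measure_inter_preimage_eq_mul Finset.univ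
    (sets := fun j => {v j}) fun j _ => measurableSet_singleton _
  simp only [Finset.mem_univ, Set.iInter_true] at hprod
  rw [preimage_ofFn_singleton_ofFn, hprod, List.map_ofFn, List.prod_ofFn]
  refine Finset.prod_congr rfl fun j _ => ?_
  rw [Function.comp_apply, ← hdist j, Measure.map_apply (hmeas j) (measurableSet_singleton _)]

theorem measure_ofFn_mem (hmeas : ∀ j, Measurable (G j)) (hindep : iIndepFun G P)
    (hdist : ∀ j, P.map (G j) = μ) {k : ℕ} {S : Set (List β)} (hS : S.Countable)
    (hlen : ∀ w ∈ S, w.length = k) :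
    P {ω | List.ofFn (fun j : Fin k => G j ω) ∈ S} = ∑' w : S, (w.1.map fun a => μ {a}).prod := by
  have hofFn : ∀ w ∈ S, ∃ v : Fin k → β, List.ofFn v = w := fun w hw =>
    ⟨fun j => w[j]'(hlen w hw ▸ j.2), List.ext_getElem (by simp [hlen w hw]) fun _ _ _ => by simp⟩
  refine (tsum_measure_preimage_singleton hS fun w hw => ?_).symm.trans (tsum_congr fun w => ?_)
  · obtain ⟨v, rfl⟩ := hofFn w hw
    rw [preimage_ofFn_singleton_ofFn]
    exact MeasurableSet.iInter fun j => hmeas j (measurableSet_singleton _)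
  · obtain ⟨v, hv⟩ := hofFn w.1 w.2
    rw [← hv]
    exact measure_preimage_ofFn_singleton hmeas hindep hdist v

end RandomWords

/-- let `(p_i)_{i ∈ 𝕀}` be a non-degenerate probability distribution `μ` on a
countable set `𝕀 ⊆ ℝ` and let `G_1, G_2, …` be i.i.d. with this distribution. Then
`P((G_1, …, G_k) is primitive) → 1` as `k → ∞`, and for every fixed `l ≥ 1` the sum
`Σ_{w ∈ Q_k} (p_{w_1} ⋯ p_{w_k})^l` over primitive words of length `k` over `𝕀` is
asymptotically equivalent to `(Σ_{i ∈ 𝕀} p_i^l)^k = ‖p‖_l^{lk}` (the sum over all words of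
length `k`), in the sense that the ratio tends to `1`. -/
theorem stmt12 {Ω : Type*} [MeasurableSpace Ω] (P : Measure Ω) [IsProbabilityMeasure P]
    (𝕀 : Set ℝ) (h𝕀 : 𝕀.Countable)
    (μ : Measure ℝ) [IsProbabilityMeasure μ] (hμ : μ 𝕀ᶜ = 0)
    (hnondeg : ∀ a : ℝ, μ {a} ≠ 1)
    (G : ℕ → Ω → ℝ) (hmeas : ∀ j, Measurable (G j))
    (hindep : iIndepFun G P)
    (hdist : ∀ j, Measure.map (G j) P = μ) :
    Tendsto (fun k : ℕ =>
        P {ω | IsPrimitiveWord (List.ofFn (fun j : Fin k => G j ω))}) atTop (𝓝 1) ∧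
    ∀ l : ℕ, 1 ≤ l →
      Tendsto (fun k : ℕ =>
          (∑' w : {w : List ℝ // w.length = k ∧ IsPrimitiveWord w ∧ ∀ a ∈ w, a ∈ 𝕀},
              ((w.1.map fun a => (μ {a}).toReal).prod) ^ l) /
            (∑' i : 𝕀, (μ {(i : ℝ)}).toReal ^ l) ^ k) atTop (𝓝 1) := by
  have hsum : ∑' a : 𝕀, μ {(a : ℝ)} = 1 :=
    (tsum_measure_preimage_singleton h𝕀 (f := id) fun y _ => measurableSet_singleton y).trans
      ((prob_compl_eq_zero_iff h𝕀.measurableSet).1 hμ)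
  obtain ⟨b, hb, c, hc, hbc, hb0, hc0⟩ :=
    exists_pair_ne_zero_of_tsum_eq_one hsum fun a _ => hnondeg a
  refine ⟨?_, fun l hl => ?_⟩
  · refine tendsto_of_tendsto_of_tendsto_of_le_of_le
      (tendsto_tsum_primitiveWords (q := fun a => μ {a}) hsum hb hc hbc hb0 hc0)
      tendsto_const_nhds (fun k => ?_) fun _ => prob_le_one
    rw [← measure_ofFn_mem hmeas hindep hdist (countable_primitiveWords h𝕀 k) fun w hw => hw.1]
    exact measure_mono fun ω hω => hω.2.1
  · have hS : ∑' i : 𝕀, μ {(i : ℝ)} ^ l ≠ ∞ := ne_top_of_le_ne_top ENNReal.one_ne_top <|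
      hsum ▸ ENNReal.tsum_le_tsum fun i => pow_le_of_le_one zero_le prob_le_one (by omega)
    exact ((ENNReal.tendsto_toReal ENNReal.one_ne_top).comp
      (tendsto_tsum_primitiveWords_div_pow (q := fun a => μ {a} ^ l) hS hb hc hbc
        (pow_ne_zero l hb0) (pow_ne_zero l hc0))).congr
      fun k => ENNReal.toReal_tsum_div_tsum_pow (fun a => measure_ne_top μ {a}) l k _
end

section
/- Let g ∈ 𝕀^n, let k ∈ ℕ*, and let x_1 ∈ {1,…,n} satisfy std(g)^k(x_1) = x_1. Define x_2 = std(g)(x_1), …, x_k = std(g)(x_{k−1}), and i_1 = g_{x_1}, …, i_k = g_{x_k}. Then the size d of the cycle of x_1 in std(g) equals the length of the root of the word i = (i_1,…,i_k), i.e., the length of the unique primitive word r with i = r^{k/d}. -/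
open Function

namespace List

variable {α : Type*}

theorem getElem?_flatten_replicate (w : List α) {m j : ℕ} (hj : j < m * w.length) :
    (replicate m w).flatten[j]? = w[j % w.length]? := by
  induction m generalizing j with
  | zero => simp at hj
  | succ m ih =>
    rw [replicate_succ, flatten_cons, getElem?_append]
    split_ifs with hjw
    · rw [Nat.mod_eq_of_lt hjw]
    · rw [ih (by rw [Nat.succ_mul] at hj; omega), ← Nat.mod_eq_sub_mod (not_lt.1 hjw)]

end List

section PowersOfWords

variable {α : Type*} {f : ℕ → α} {k m : ℕ} {r : List α}

theorem Function.Periodic.ofFn_eq_flatten_replicate {p : ℕ} (hf : Periodic f p) (t : ℕ) :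
    List.ofFn (fun j : Fin (t * p) => f j) =
      (List.replicate t (List.ofFn fun j : Fin p => f j)).flatten := by
  have hshift (i j : ℕ) : f (i * p + j) = f j := by rw [add_comm]; exact hf.nat_mul i j
  simp only [List.ofFn_mul, hshift, List.ofFn_const]

theorem List.getElem?_mod_length_of_ofFn_eq_flatten_replicate
    (h : List.ofFn (fun j : Fin k => f j) = (List.replicate m r).flatten) {j : ℕ} (hj : j < k) :
    r[j % r.length]? = some (f j) := by
  have hlen : k = m * r.length := by simpa using congrArg List.length h
  have hj' := congrArg (·[j]?) h
  simp only [List.getElem?_ofFn, dif_pos hj] at hj'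
  exact (r.getElem?_flatten_replicate (hlen ▸ hj)).symm.trans hj'.symm

theorem List.length_dvd_of_ofFn_eq_flatten_replicate
    (h : List.ofFn (fun j : Fin k => f j) = (List.replicate m r).flatten) : r.length ∣ k :=
  Dvd.intro_left m (by simpa using (congrArg List.length h).symm)

theorem Function.Periodic.periodic_of_ofFn_eq_flatten_replicate (hf : Periodic f k) (hk : 0 < k)
    (h : List.ofFn (fun j : Fin k => f j) = (List.replicate m r).flatten) :
    Periodic f r.length := fun j => by
  have hdvd := List.length_dvd_of_ofFn_eq_flatten_replicate h
  apply Option.some_injective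
  rw [← hf.map_mod_nat, ← hf.map_mod_nat j,
    ← List.getElem?_mod_length_of_ofFn_eq_flatten_replicate h (Nat.mod_lt _ hk),
    ← List.getElem?_mod_length_of_ofFn_eq_flatten_replicate h (Nat.mod_lt _ hk),
    Nat.mod_mod_of_dvd _ hdvd, Nat.mod_mod_of_dvd _ hdvd, Nat.add_mod_right]

theorem List.eq_ofFn_of_ofFn_eq_flatten_replicate (hk : 0 < k)
    (h : List.ofFn (fun j : Fin k => f j) = (List.replicate m r).flatten) :
    r = List.ofFn (fun j : Fin r.length => f j) := List.ext_getElem? fun j => by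
  rw [List.getElem?_ofFn]
  split_ifs with hj
  · have hjk := hj.trans_le (Nat.le_of_dvd hk (List.length_dvd_of_ofFn_eq_flatten_replicate h))
    rw [← List.getElem?_mod_length_of_ofFn_eq_flatten_replicate h hjk, Nat.mod_eq_of_lt hj]
  · exact List.getElem?_eq_none (not_lt.1 hj)

end PowersOfWords

theorem IsPrimitiveWord.eq_one_of_eq_flatten_replicate {α : Type*} {w u : List α} {t : ℕ}
    (hw : IsPrimitiveWord w) (h : w = (List.replicate t u).flatten) : t = 1 := by
  have hw_nil : w ≠ [] := by
    rintro rfl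
    exact hw ⟨[], 2, le_rfl, by simp⟩
  have ht : t ≠ 0 := by
    rintro rfl
    exact hw_nil h
  have ht' : ¬ 2 ≤ t := fun ht' => hw ⟨u, t, ht', h⟩
  omega

section OrbitUnderFibrewiseMonotoneMap

variable {α β : Type*} {σ : α → α} {c : α → β} {x : α} {k ℓ : ℕ}

theorem Function.IsPeriodicPt.periodic_comp_iterate (hx : IsPeriodicPt σ k x) (c : α → β) :
    Periodic (fun j => c (σ^[j] x)) k := fun j =>
  congrArg c (by rw [iterate_add_apply, hx.eq])

theorem iterate_lt_iterate_add_of_lt_iterate [Preorder α]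
    (hσ : ∀ v, StrictMonoOn σ (c ⁻¹' {v})) (hc : Periodic (fun j => c (σ^[j] x)) ℓ)
    (hx : x < σ^[ℓ] x) (j : ℕ) : σ^[j] x < σ^[j + ℓ] x := by
  induction j with
  | zero => simpa using hx
  | succ j ih =>
    rw [iterate_succ_apply', show j + 1 + ℓ = (j + ℓ) + 1 by omega, iterate_succ_apply']
    exact hσ (c (σ^[j] x)) rfl (hc j) ih

theorem not_isPeriodicPt_of_lt_iterate [Preorder α]
    (hσ : ∀ v, StrictMonoOn σ (c ⁻¹' {v})) (hc : Periodic (fun j => c (σ^[j] x)) ℓ)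
    (hk : 0 < k) (hx : x < σ^[ℓ] x) : ¬ IsPeriodicPt σ k x := by
  intro hxk
  have hmono : StrictMono fun t => σ^[t * ℓ] x := strictMono_nat_of_lt_succ fun t => by
    simpa [Nat.succ_mul] using iterate_lt_iterate_add_of_lt_iterate hσ hc hx (t * ℓ)
  have hlt := hmono hk
  simp only [zero_mul, iterate_zero_apply, (hxk.mul_const ℓ).eq] at hlt
  exact lt_irrefl x hlt

theorem isPeriodicPt_of_periodic_comp_iterate [LinearOrder α]
    (hσ : ∀ v, StrictMonoOn σ (c ⁻¹' {v})) (hc : Periodic (fun j => c (σ^[j] x)) ℓ)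
    (hk : 0 < k) (hxk : IsPeriodicPt σ k x) : IsPeriodicPt σ ℓ x := by
  rcases lt_trichotomy (σ^[ℓ] x) x with h | h | h
  · exact absurd hxk (not_isPeriodicPt_of_lt_iterate (α := αᵒᵈ) (fun v => (hσ v).dual) hc hk h)
  · exact h
  · exact absurd hxk (not_isPeriodicPt_of_lt_iterate hσ hc hk h)

end OrbitUnderFibrewiseMonotoneMap

/-- let `std` be the standardization map (characterized by
`std g j < std g k ↔ g j < g k ∨ (g j = g k ∧ j < k)`), let `x₁` satisfy `std(g)^k(x₁) = x₁`,
and form the word `i = (g(x₁), g(std(g)(x₁)), …, g(std(g)^{k-1}(x₁)))`. If `r` is the root of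
`i`, i.e. the primitive word such that `i` is a power of `r`, then the length of `r` equals the
size of the cycle of `x₁` in `std(g)` (the minimal period of `x₁` under `std(g)`). -/
theorem stmt13 (n : ℕ)
    (std : (Fin n → ℝ) → Equiv.Perm (Fin n))
    (hstd : ∀ (g : Fin n → ℝ) (j k : Fin n),
      std g j < std g k ↔ (g j < g k ∨ (g j = g k ∧ j < k)))
    (g : Fin n → ℝ) (k : ℕ) (hk : 1 ≤ k) (x₁ : Fin n)
    (hx : ((std g) ^ k) x₁ = x₁)
    (r : List ℝ) (hr : IsPrimitiveWord r) (m : ℕ)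
    (hroot : List.ofFn (fun j : Fin k => g (((std g) ^ (j : ℕ)) x₁)) =
      (List.replicate m r).flatten) :
    r.length = Function.minimalPeriod (std g) x₁ := by
  set σ := std g
  have hxk : IsPeriodicPt σ k x₁ := hx
  have hσ (v : ℝ) : StrictMonoOn σ (g ⁻¹' {v}) := fun a ha b hb hab =>
    (hstd g a b).2 (Or.inr ⟨ha.trans hb.symm, hab⟩)
  have hℓ : IsPeriodicPt σ r.length x₁ := isPeriodicPt_of_periodic_comp_iterate hσ
    ((hxk.periodic_comp_iterate g).periodic_of_ofFn_eq_flatten_replicate hk hroot) hk hxk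
  have hr_eq := List.eq_ofFn_of_ofFn_eq_flatten_replicate (f := fun j => g (σ^[j] x₁)) hk hroot
  have hd := (isPeriodicPt_minimalPeriod σ x₁).periodic_comp_iterate g
  obtain ⟨t, ht⟩ := hℓ.minimalPeriod_dvd
  rw [ht, mul_comm, hd.ofFn_eq_flatten_replicate] at hr_eq
  rw [ht, hr.eq_one_of_eq_flatten_replicate hr_eq, mul_one]
end

section
/- Let k ≥ 1 and let i = (i_1,…,i_k) be a primitive word of length k over 𝕀. Then there exists a unique g ∈ 𝕀^k such that std(g) is a k-cycle (x_1,…,x_k) of type i, i.e., such that std(g) is a k-cycle and, writing its support in cyclic order as (x_1,…,x_k) with std(g)(x_j) = x_{j+1} (indices mod k), one has g_{x_j} = i_j for all j. -/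
theorem Pi.toLex_lt_toLex_iff_zero_succ {α : Type*} [LT α] {a b : ℕ → α} :
    toLex a < toLex b ↔
      a 0 < b 0 ∨ (a 0 = b 0 ∧ toLex (fun n => a (n + 1)) < toLex (fun n => b (n + 1))) := by
  change Pi.Lex (· < ·) (· < ·) a b ↔ _ ∨ (_ ∧ Pi.Lex (· < ·) (· < ·) _ _)
  constructor
  · rintro ⟨_ | i, heq, hlt⟩
    · exact Or.inl hlt
    · exact Or.inr ⟨heq 0 i.succ_pos, i, fun j hj => heq (j + 1) (by omega), hlt⟩
  · rintro (hlt | ⟨h0, i, heq, hlt⟩)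
    · exact ⟨0, fun j hj => absurd hj j.not_lt_zero, hlt⟩
    · refine ⟨i + 1, fun j hj => ?_, hlt⟩
      cases j with
      | zero => exact h0
      | succ j => exact heq j (by omega)

theorem Equiv.eq_of_lt_iff_lt {ι β : Type*} [LinearOrder β] [WellFoundedLT β] {e₁ e₂ : ι ≃ β}
    (h : ∀ a b, e₁ a < e₁ b ↔ e₂ a < e₂ b) : e₁ = e₂ := by
  have hmono : StrictMono (e₁.symm.trans e₂) := fun y z hyz => by
    simpa [← h] using hyz
  have hid := Subsingleton.elim (hmono.orderIsoOfSurjective _ (Equiv.surjective _))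
    (OrderIso.refl β)
  ext a
  simpa using (congrArg (fun f : β ≃o β => f (e₁ a)) hid).symm

theorem exists_equiv_fin_lt_iff {ι α : Type*} [Fintype ι] [LinearOrder α] {u : ι → α} {m : ℕ}
    (hu : Function.Injective u) (hm : Fintype.card ι = m) :
    ∃ e : ι ≃ Fin m, ∀ a b, e a < e b ↔ u a < u b :=
  ⟨(Equiv.ofInjective u hu).trans
      (Fintype.orderIsoFinOfCardEq _ ((Set.card_range_of_injective hu).trans hm)).symm.toEquiv,
    fun a b => by simp [← Subtype.coe_lt_coe]⟩

section BackwardWord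

variable {ι α : Type*} (s : Equiv.Perm ι) (c : ι → α)

def backwardWord (a : ι) : ℕ → α := fun n => c (s.symm^[n + 1] a)

theorem backwardWord_zero (a : ι) : backwardWord s c a 0 = c (s.symm a) := rfl

theorem backwardWord_succ (a : ι) (n : ℕ) :
    backwardWord s c a (n + 1) = backwardWord s c (s.symm a) n := by
  simp only [backwardWord, Function.iterate_succ_apply]

def IsLexRecursive [LT α] (R : ι → ι → Prop) : Prop :=
  ∀ a b, R (s a) (s b) ↔ c a < c b ∨ (c a = c b ∧ R a b)

variable {s c}

theorem IsLexRecursive.iff_symm [LT α] {R : ι → ι → Prop} (hR : IsLexRecursive s c R)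
    (a b : ι) : R a b ↔ c (s.symm a) < c (s.symm b) ∨
      (c (s.symm a) = c (s.symm b) ∧ R (s.symm a) (s.symm b)) := by
  simpa using hR (s.symm a) (s.symm b)

theorem isLexRecursive_backwardWord [LT α] :
    IsLexRecursive s c (fun a b => toLex (backwardWord s c a) < toLex (backwardWord s c b)) := by
  intro a b
  dsimp only
  rw [Pi.toLex_lt_toLex_iff_zero_succ]
  simp only [backwardWord_zero, backwardWord_succ, Equiv.symm_apply_apply]

theorem IsLexRecursive.iff_of_backwardWord_ne [LinearOrder α] {R R' : ι → ι → Prop}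
    (hR : IsLexRecursive s c R) (hR' : IsLexRecursive s c R') {a b : ι}
    (hab : backwardWord s c a ≠ backwardWord s c b) : R a b ↔ R' a b := by
  suffices key : ∀ n a b, (∀ p < n, backwardWord s c a p = backwardWord s c b p) →
      backwardWord s c a n ≠ backwardWord s c b n → (R a b ↔ R' a b) by
    classical
    have hex := Function.ne_iff.mp hab
    exact key _ a b (fun p hp => not_not.mp (Nat.find_min hex hp)) (Nat.find_spec hex)
  intro n
  induction n with
  | zero =>
    intro a b _ hne
    rw [backwardWord_zero, backwardWord_zero] at hne
    rw [hR.iff_symm, hR'.iff_symm]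
    simp [hne]
  | succ n ih =>
    intro a b heq hne
    have h0 : c (s.symm a) = c (s.symm b) := heq 0 n.succ_pos
    rw [hR.iff_symm, hR'.iff_symm, h0, ih (s.symm a) (s.symm b)
      (fun p hp => by simpa only [backwardWord_succ] using heq (p + 1) (by omega))
      (by simpa only [backwardWord_succ] using hne)]

theorem IsLexRecursive.iff_toLex_lt [LinearOrder α] {R : ι → ι → Prop}
    (hR : IsLexRecursive s c R) (hirr : ∀ a, ¬ R a a)
    (hinj : Function.Injective (backwardWord s c)) (a b : ι) :
    R a b ↔ toLex (backwardWord s c a) < toLex (backwardWord s c b) := by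
  rcases eq_or_ne a b with rfl | hab
  · exact iff_of_false (hirr a) (lt_irrefl _)
  · exact hR.iff_of_backwardWord_ne isLexRecursive_backwardWord (hinj.ne hab)

end BackwardWord

theorem not_isPrimitiveWord_ofFn_of_forall_eq_mod {α : Type*} {k e : ℕ} (he : 0 < e)
    (hek : e < k) (hdvd : e ∣ k) (c : Fin k → α)
    (hc : ∀ i : Fin k, c i = c ⟨i % e, (Nat.mod_lt _ he).trans hek⟩) :
    ¬ IsPrimitiveWord (List.ofFn c) := by
  obtain ⟨q, rfl⟩ := hdvd
  have hq : 2 ≤ q := by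
    by_contra! hq
    interval_cases q <;> simp at hek
  refine not_not.mpr ⟨List.ofFn fun j : Fin e => c ⟨j, j.2.trans hek⟩, q, hq, ?_⟩
  rw [← List.ofFn_fin_repeat, List.ofFn_congr (Nat.mul_comm e q)]
  congr 1
  funext i
  rw [hc, Fin.repeat_apply]
  rfl

section FinPeriodic

open Fin.CommRing

variable {α : Type*} {n : ℕ} {c : Fin (n + 1) → α}

theorem Function.Periodic.natCast_gcd_val {d : Fin (n + 1)} (hd : Function.Periodic c d) :
    Function.Periodic c (Nat.gcd d.val (n + 1) : Fin (n + 1)) := by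
  have hbezout : ((Nat.gcd d.val (n + 1) : ℕ) : Fin (n + 1)) =
      (Nat.gcdA d.val (n + 1) : Fin (n + 1)) * d := by
    have h := congrArg (Int.cast : ℤ → Fin (n + 1)) (Nat.gcd_eq_gcd_ab d.val (n + 1))
    push_cast at h
    simpa [mul_comm] using h
  rw [hbezout]
  exact hd.int_mul _

theorem Function.Periodic.apply_eq_apply_mod {e : ℕ} (he : Function.Periodic c (e : Fin (n + 1)))
    (i : Fin (n + 1)) : c i = c ((i.val % e : ℕ) : Fin (n + 1)) := by
  have hi : i = ((i.val % e : ℕ) : Fin (n + 1)) + ((i.val / e : ℕ) : Fin (n + 1)) * e := by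
    rw [← Nat.cast_mul, ← Nat.cast_add, Nat.mod_add_div', Fin.cast_val_eq_self]
  exact (congrArg c hi).trans (he.nat_mul _ _)

theorem IsPrimitiveWord.eq_zero_of_periodic (hw : IsPrimitiveWord (List.ofFn c)) {d : Fin (n + 1)}
    (hd : Function.Periodic c d) : d = 0 := by
  by_contra hd0
  have hdpos : 0 < d.val := Fin.pos_iff_ne_zero.mpr hd0
  set e := Nat.gcd d.val (n + 1)
  have he : 0 < e := Nat.gcd_pos_of_pos_left _ hdpos
  have hen : e < n + 1 := (Nat.gcd_le_left _ hdpos).trans_lt d.isLt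
  refine not_isPrimitiveWord_ofFn_of_forall_eq_mod he hen (Nat.gcd_dvd_right _ _) c
    (fun i => ?_) hw
  rw [hd.natCast_gcd_val.apply_eq_apply_mod i]
  congr 1
  exact Fin.ext (Fin.val_cast_of_lt ((Nat.mod_lt _ he).trans hen))

theorem finRotate_symm_iterate_apply (m : ℕ) (j : Fin (n + 1)) :
    (finRotate (n + 1)).symm^[m] j = j - m := by
  induction m with
  | zero => simp
  | succ m ih =>
    rw [Function.iterate_succ_apply', ih, finRotate_symm_apply, Nat.cast_succ, sub_sub]

theorem IsPrimitiveWord.backwardWord_finRotate_injective (hw : IsPrimitiveWord (List.ofFn c)) :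
    Function.Injective (backwardWord (finRotate (n + 1)) c) := by
  intro a b hab
  have hper : Function.Periodic c (b - a) := by
    intro j
    have h := congrFun hab (a - j - 1).val
    simp only [backwardWord, finRotate_symm_iterate_apply, Nat.cast_add, Fin.cast_val_eq_self,
      Nat.cast_one] at h
    convert h.symm using 2 <;> ring
  exact (sub_eq_zero.mp (hw.eq_zero_of_periodic hper)).symm

end FinPeriodic

/-- let `std` be the standardization map on sequences of length `k`
(characterized by `std g j < std g m ↔ g j < g m ∨ (g j = g m ∧ j < m)`), and let
`w = (i_1, …, i_k)` be a primitive word of length `k ≥ 1` over `𝕀`. Then there is a unique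
`g ∈ 𝕀^k` such that `std g` is a `k`-cycle `(x_1, …, x_k)` of type `w`, i.e. `std g` maps each
`x_j` to `x_{j+1}` (indices mod `k`, with `x` injective) and `g (x_j) = i_j` for all `j`. -/
theorem stmt14 (𝕀 : Set ℝ) (k : ℕ) (hk : 1 ≤ k)
    (std : (Fin k → ℝ) → Equiv.Perm (Fin k))
    (hstd : ∀ (g : Fin k → ℝ) (j m : Fin k),
      std g j < std g m ↔ (g j < g m ∨ (g j = g m ∧ j < m)))
    (w : List ℝ) (hlen : w.length = k) (hprim : IsPrimitiveWord w)
    (hw𝕀 : ∀ a ∈ w, a ∈ 𝕀) :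
    ∃! g : Fin k → ℝ, (∀ j, g j ∈ 𝕀) ∧
      ∃ x : Fin k → Fin k, Function.Injective x ∧
        (∀ j : Fin k, std g (x j) = x ⟨((j : ℕ) + 1) % k, Nat.mod_lt _ j.pos⟩) ∧
        ∀ j : Fin k, g (x j) = w.get (Fin.cast hlen.symm j) := by
  obtain ⟨n, rfl⟩ : ∃ n, k = n + 1 := ⟨k - 1, by omega⟩
  set s := finRotate (n + 1)
  set c : Fin (n + 1) → ℝ := fun j => w.get (Fin.cast hlen.symm j)
  have hsucc (j : Fin (n + 1)) :
      (⟨(j + 1) % (n + 1), Nat.mod_lt _ j.pos⟩ : Fin (n + 1)) = s j := by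
    simp [s, Fin.ext_iff, Fin.val_add]
  have hu : Function.Injective (backwardWord s c) := by
    refine IsPrimitiveWord.backwardWord_finRotate_injective ?_
    rwa [List.ofFn_congr hlen.symm, show (List.ofFn fun i => c (Fin.cast _ i)) = w from
      List.ofFn_get w]
  have hrec (g : Fin (n + 1) → ℝ) (x : Fin (n + 1) → Fin (n + 1)) (hx : ∀ j, g (x j) = c j)
      (a b) :
      std g (x a) < std g (x b) ↔ c a < c b ∨ (c a = c b ∧ x a < x b) := by
    rw [hstd, hx, hx]
  obtain ⟨e, he⟩ := exists_equiv_fin_lt_iff (toLex.injective.comp hu) (Fintype.card_fin _)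
  have hcyc : e.trans (std (c ∘ e.symm)) = s.trans e := by
    refine Equiv.eq_of_lt_iff_lt fun a b => ?_
    simp only [Equiv.trans_apply]
    rw [hrec _ e (by simp) a b, he, he]
    exact (isLexRecursive_backwardWord a b).symm
  refine ⟨c ∘ e.symm, ⟨fun q => hw𝕀 _ (List.get_mem _ _), e, e.injective, fun j => ?_,
    fun j => congrArg c (e.symm_apply_apply j)⟩, ?_⟩
  · rw [hsucc]; exact Equiv.ext_iff.mp hcyc j
  rintro g ⟨-, x, hxinj, hxcyc, hxtype⟩
  set X := Equiv.ofBijective x (Finite.injective_iff_bijective.mp hxinj)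
  have hX : IsLexRecursive s c (fun a b => X a < X b) := fun a b => by
    have := hrec g x hxtype a b
    rwa [hxcyc, hxcyc, hsucc, hsucc] at this
  have hXe : X = e := Equiv.eq_of_lt_iff_lt fun a b =>
    (hX.iff_toLex_lt (fun a => lt_irrefl _) hu a b).trans (he a b).symm
  funext q
  obtain ⟨j, rfl⟩ := e.surjective q
  calc g (e j) = c j := hXe ▸ hxtype j
    _ = (c ∘ e.symm) (e j) := by simp
end

section
/- Let C be a countable set, and let (X^n)_{n∈ℕ} and X be random variables with values in ℓ¹(C). Assume that (i) the finite-dimensional distributions of X^n converge to those of X, i.e., for every finite subset F ⊆ C the random vector (X^n_i)_{i∈F} converges in distribution to (X_i)_{i∈F}; and (ii) there exists u ∈ ℓ¹(C) such that for every n and every i ∈ C, E(|X^n_i|) ≤ u_i. Then X^n converges in distribution to X in the norm topology of ℓ¹(C). -/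
/-!
Truncating `x ∈ ℓ¹(C)` to a finite set `F` of coordinates moves it by `∑_{i ∉ F} |x i|`, whose
expectation is at most `∑_{i ∉ F} u i` under each law `Xⁿ`, and also under the law of `Y`, since
`E|Yᵢ| ≤ liminf E|Xⁿᵢ|` by weak convergence of the one-dimensional marginals. For a bounded
Lipschitz `f`, the integrals of `f` and of `f` composed with the truncation are therefore uniformly
close, and the latter converge by the convergence of the finite-dimensional distributions. By the
portmanteau theorem, bounded Lipschitz test functions suffice for weak convergence.
-/

open MeasureTheory Filter Topology
open scoped ENNReal NNReal BoundedContinuousFunction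

local notation "ℓ¹(" C ", " E ")" => lp (fun _ : C => E) 1

lemma tendsto_of_forall_dist_le {ι α : Type*} [PseudoMetricSpace α] {l : Filter ι}
    {a : ι → α} {a₀ : α}
    (h : ∀ ε > 0, ∃ (b : ι → α) (b₀ : α),
      Tendsto b l (𝓝 b₀) ∧ (∀ i, dist (a i) (b i) ≤ ε) ∧ dist a₀ b₀ ≤ ε) :
    Tendsto a l (𝓝 a₀) := by
  refine Metric.tendsto_nhds.2 fun ε hε => ?_
  obtain ⟨b, b₀, hb, hab, hab₀⟩ := h (ε / 4) (by positivity)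
  filter_upwards [Metric.tendsto_nhds.1 hb (ε / 4) (by positivity)] with i hi
  calc dist (a i) a₀ ≤ dist (a i) (b i) + dist (b i) b₀ + dist b₀ a₀ := dist_triangle4 ..
    _ < ε := by rw [dist_comm b₀]; linarith [hab i]

lemma MeasureTheory.ProbabilityMeasure.lintegral_le_liminf_lintegral_of_tendsto {Ω : Type*}
    [MeasurableSpace Ω] [TopologicalSpace Ω] [OpensMeasurableSpace Ω] [HasOuterApproxClosed Ω]
    {μs : ℕ → ProbabilityMeasure Ω} {μ : ProbabilityMeasure Ω} (h : Tendsto μs atTop (𝓝 μ))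
    {f : Ω → ℝ} (hf : Continuous f) (hf₀ : 0 ≤ f) :
    ∫⁻ x, ENNReal.ofReal (f x) ∂μ ≤ atTop.liminf fun n => ∫⁻ x, ENNReal.ofReal (f x) ∂μs n :=
  lintegral_le_liminf_lintegral_of_forall_isOpen_measure_le_liminf_measure hf hf₀
    fun _ hG => ProbabilityMeasure.le_liminf_measure_open_of_tendsto h hG

lemma MeasureTheory.ProbabilityMeasure.tendsto_map_iff_forall_integral_comp_tendsto
    {γ Ω Ω' T : Type*} [MeasurableSpace Ω] [MeasurableSpace Ω'] [MeasurableSpace T]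
    [TopologicalSpace T] [OpensMeasurableSpace T] {L : Filter γ} {P : ProbabilityMeasure Ω}
    {P' : ProbabilityMeasure Ω'} {X : γ → Ω → T} {Y : Ω' → T}
    (hX : ∀ n, AEMeasurable (X n) P) (hY : AEMeasurable Y P') :
    Tendsto (fun n => P.map (hX n)) L (𝓝 (P'.map hY)) ↔
      ∀ f : T →ᵇ ℝ, Tendsto (fun n => ∫ ω, f (X n ω) ∂P) L (𝓝 (∫ ω, f (Y ω) ∂P')) := by
  refine ProbabilityMeasure.tendsto_iff_forall_integral_tendsto.trans (forall_congr' fun f => ?_)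
  simp only [ProbabilityMeasure.toMeasure_map,
    integral_map (hX _) f.continuous.aestronglyMeasurable,
    integral_map hY f.continuous.aestronglyMeasurable]

section Truncation

variable {C E : Type*} [NormedAddCommGroup E]

lemma lp.enorm_eq_tsum_enorm (x : ℓ¹(C, E)) : ‖x‖ₑ = ∑' i, ‖x i‖ₑ := by
  have hx : HasSum (fun i => ‖x i‖) ‖x‖ := by simpa using lp.hasSum_norm (p := 1) (by simp) x
  rw [← ofReal_norm, ← hx.tsum_eq,
    ENNReal.ofReal_tsum_of_nonneg (fun _ => norm_nonneg _) hx.summable]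
  simp_rw [ofReal_norm]

variable [DecidableEq C]

lemma lp.enorm_sub_sum_single (x : ℓ¹(C, E)) (F : Finset C) :
    ‖x - ∑ i ∈ F, lp.single 1 i (x i)‖ₑ = ∑' i : {i // i ∉ F}, ‖x i‖ₑ := by
  rw [lp.enorm_eq_tsum_enorm]
  refine Eq.trans ?_ (tsum_subtype {i | i ∉ F} fun i => ‖x i‖ₑ).symm
  congr 1 with i
  simp only [lp.coeFn_sub, lp.coeFn_sum, lp.coeFn_single, Pi.sub_apply, Finset.sum_apply,
    Finset.sum_pi_single]
  by_cases hi : i ∈ F <;> simp [hi]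

lemma lp.continuous_sum_single (F : Finset C) :
    Continuous fun x : ℓ¹(C, E) => ∑ i ∈ F, lp.single 1 i (x i) :=
  continuous_finsetSum F fun i _ =>
    (lp.isometry_single i).continuous.comp (lp.lipschitzWith_one_eval 1 i).continuous

variable [Countable C] [MeasurableSpace ℓ¹(C, E)] [OpensMeasurableSpace ℓ¹(C, E)]

lemma lintegral_enorm_sub_sum_single (m : Measure ℓ¹(C, E)) (F : Finset C) :
    ∫⁻ x, ‖x - ∑ i ∈ F, lp.single 1 i (x i)‖ₑ ∂m = ∑' i : {i // i ∉ F}, ∫⁻ x, ‖x i‖ₑ ∂m := by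
  simp_rw [lp.enorm_sub_sum_single]
  exact lintegral_tsum fun i =>
    (lp.lipschitzWith_one_eval 1 (i : C)).continuous.enorm.aemeasurable

lemma edist_integral_integral_sum_single_le (m : Measure ℓ¹(C, E)) [IsFiniteMeasure m]
    (f : ℓ¹(C, E) →ᵇ ℝ) {K : ℝ≥0} (hf : LipschitzWith K f) (F : Finset C) :
    edist (∫ x, f x ∂m) (∫ x, f (∑ i ∈ F, lp.single 1 i (x i)) ∂m)
      ≤ K * ∑' i : {i // i ∉ F}, ∫⁻ x, ‖x i‖ₑ ∂m := by
  have hf_trunc : Integrable (fun x : ℓ¹(C, E) => f (∑ i ∈ F, lp.single 1 i (x i))) m :=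
    (f.compContinuous ⟨_, lp.continuous_sum_single F⟩).integrable m
  rw [edist_eq_enorm_sub, ← integral_sub (f.integrable m) hf_trunc,
    ← lintegral_enorm_sub_sum_single, ← lintegral_const_mul' _ _ ENNReal.coe_ne_top]
  refine (enorm_integral_le_lintegral_enorm _).trans (lintegral_mono fun x => ?_)
  rw [← edist_eq_enorm_sub, ← edist_eq_enorm_sub]
  exact hf.edist_le_mul _ _

end Truncation

section WeakConvergence

variable {C E : Type*} [NormedAddCommGroup E] [MeasurableSpace E] [BorelSpace E]
  [SecondCountableTopology E] [MeasurableSpace ℓ¹(C, E)] [OpensMeasurableSpace ℓ¹(C, E)]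

lemma lp.measurable_restrict (F : Finset C) : Measurable fun x : ℓ¹(C, E) => F.restrict ⇑x :=
  ((Finset.continuous_restrict (A := fun _ => E) F).comp
    lp.uniformContinuous_coe.continuous).measurable

variable (E) in
noncomputable def finiteDimDistrib (μ : ProbabilityMeasure ℓ¹(C, E)) (F : Finset C) :
    ProbabilityMeasure (F → E) :=
  μ.map (lp.measurable_restrict F).aemeasurable

lemma finiteDimDistrib_map {Ω : Type*} [MeasurableSpace Ω] (P : ProbabilityMeasure Ω)
    {X : Ω → ℓ¹(C, E)} (hX : Measurable X) (F : Finset C) :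
    finiteDimDistrib E (P.map hX.aemeasurable) F
      = P.map ((lp.measurable_restrict F).comp hX).aemeasurable :=
  Subtype.ext (Measure.map_map (lp.measurable_restrict F) hX)

variable {μs : ℕ → ProbabilityMeasure ℓ¹(C, E)} {μ : ProbabilityMeasure ℓ¹(C, E)}
  {w : C → ℝ≥0∞}

lemma lintegral_enorm_apply_le_of_tendsto_finiteDimDistrib
    (hfdd : ∀ F : Finset C,
      Tendsto (fun n => finiteDimDistrib E (μs n) F) atTop (𝓝 (finiteDimDistrib E μ F)))
    (hdom : ∀ n i, ∫⁻ x : ℓ¹(C, E), ‖x i‖ₑ ∂(μs n) ≤ w i) (i : C) :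
    ∫⁻ x : ℓ¹(C, E), ‖x i‖ₑ ∂μ ≤ w i := by
  let j : ({i} : Finset C) := ⟨i, Finset.mem_singleton_self i⟩
  have hfatou := ProbabilityMeasure.lintegral_le_liminf_lintegral_of_tendsto (hfdd {i})
    (f := fun v => ‖v j‖) (by fun_prop) fun _ => norm_nonneg _
  have hj : Measurable fun v : ({i} : Finset C) → E => ‖v j‖ₑ := by fun_prop
  simp only [finiteDimDistrib, ProbabilityMeasure.toMeasure_map, ofReal_norm] at hfatou
  simp only [lintegral_map hj (lp.measurable_restrict _)] at hfatou
  exact hfatou.trans (liminf_le_of_frequently_le' (.of_forall fun n => hdom n i))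

lemma tendsto_integral_of_lipschitz_of_tendsto_finiteDimDistrib [Countable C]
    (hfdd : ∀ F : Finset C,
      Tendsto (fun n => finiteDimDistrib E (μs n) F) atTop (𝓝 (finiteDimDistrib E μ F)))
    (hw : ∑' i, w i ≠ ∞) (hdom : ∀ n i, ∫⁻ x : ℓ¹(C, E), ‖x i‖ₑ ∂(μs n) ≤ w i)
    (f : ℓ¹(C, E) →ᵇ ℝ) {K : ℝ≥0} (hf : LipschitzWith K f) :
    Tendsto (fun n => ∫ x, f x ∂(μs n)) atTop (𝓝 (∫ x, f x ∂μ)) := by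
  classical
  refine tendsto_of_forall_dist_le fun ε hε => ?_
  have htail :
      Tendsto (fun F : Finset C => (K : ℝ≥0∞) * ∑' i : {i // i ∉ F}, w i) atTop (𝓝 0) := by
    simpa using ENNReal.Tendsto.const_mul (ENNReal.tendsto_tsum_compl_atTop_zero hw)
      (Or.inr ENNReal.coe_ne_top)
  obtain ⟨F, hF⟩ := (htail.eventually (gt_mem_nhds (ENNReal.ofReal_pos.2 hε))).exists
  have hclose (m : ProbabilityMeasure ℓ¹(C, E))
      (hm : ∀ i, ∫⁻ x : ℓ¹(C, E), ‖x i‖ₑ ∂m ≤ w i) :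
      dist (∫ x, f x ∂m) (∫ x : ℓ¹(C, E), f (∑ i ∈ F, lp.single 1 i (x i)) ∂m) ≤ ε := by
    rw [← edist_le_ofReal hε.le]
    calc _ ≤ _ := edist_integral_integral_sum_single_le (m : Measure ℓ¹(C, E)) f hf F
      _ ≤ K * ∑' i : {i // i ∉ F}, w i := by gcongr with i; exact hm i
      _ ≤ _ := hF.le
  refine ⟨_, _, ?_, fun n => hclose _ (hdom n),
    hclose _ (lintegral_enorm_apply_le_of_tendsto_finiteDimDistrib hfdd hdom)⟩
  let g : (F → E) →ᵇ ℝ :=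
    f.compContinuous ⟨fun v => ∑ i : F, lp.single 1 (i : C) (v i),
      continuous_finsetSum _ fun i _ =>
        (lp.isometry_single _).continuous.comp (continuous_apply i)⟩
  have hg := ProbabilityMeasure.tendsto_iff_forall_integral_tendsto.1 (hfdd F) g
  simp only [finiteDimDistrib, ProbabilityMeasure.toMeasure_map,
    integral_map (lp.measurable_restrict F).aemeasurable g.continuous.aestronglyMeasurable] at hg
  simpa [g, Finset.sum_coe_sort F] using hg

theorem tendsto_of_tendsto_finiteDimDistrib_of_lintegral_enorm_le [Countable C]
    (hfdd : ∀ F : Finset C,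
      Tendsto (fun n => finiteDimDistrib E (μs n) F) atTop (𝓝 (finiteDimDistrib E μ F)))
    (hw : ∑' i, w i ≠ ∞) (hdom : ∀ n i, ∫⁻ x : ℓ¹(C, E), ‖x i‖ₑ ∂(μs n) ≤ w i) :
    Tendsto μs atTop (𝓝 μ) :=
  tendsto_iff_forall_lipschitz_integral_tendsto.2 fun f ⟨B, hB⟩ ⟨_, hK⟩ =>
    tendsto_integral_of_lipschitz_of_tendsto_finiteDimDistrib hfdd hw hdom
      (.mkOfBound ⟨f, hK.continuous⟩ B hB) hK

end WeakConvergence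

/-- let `C` be countable, and let `X^n`, `Y` be random variables with values
in `ℓ¹(C)` (equipped with its Borel σ-algebra for the norm topology). If (i) the
finite-dimensional distributions of `X^n` converge to those of `Y`, and (ii) there exists
`u ∈ ℓ¹(C)` with `E(|X^n_i|) ≤ u_i` for all `n` and `i`, then `X^n` converges in distribution
to `Y` in the norm topology of `ℓ¹(C)`. -/
theorem stmt15 {C : Type*} [Countable C]
    {Ω Ω' : Type*} [MeasurableSpace Ω] [MeasurableSpace Ω']
    (P : Measure Ω) [IsProbabilityMeasure P] (P' : Measure Ω') [IsProbabilityMeasure P']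
    [MeasurableSpace (lp (fun _ : C => ℝ) 1)] [BorelSpace (lp (fun _ : C => ℝ) 1)]
    (X : ℕ → Ω → lp (fun _ : C => ℝ) 1) (Y : Ω' → lp (fun _ : C => ℝ) 1)
    (hXmeas : ∀ n, Measurable (X n)) (hYmeas : Measurable Y)
    (hfdd : ∀ F : Finset C, ∀ f : (↥F → ℝ) →ᵇ ℝ,
      Tendsto (fun n => ∫ ω, f (fun i : ↥F => (X n ω) (i : C)) ∂P) atTop
        (𝓝 (∫ ω, f (fun i : ↥F => (Y ω) (i : C)) ∂P')))
    (u : C → ℝ) (hu : Summable u)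
    (hdom : ∀ (n : ℕ) (i : C),
      ∫⁻ ω, ENNReal.ofReal |(X n ω) i| ∂P ≤ ENNReal.ofReal (u i)) :
    ∀ f : lp (fun _ : C => ℝ) 1 →ᵇ ℝ,
      Tendsto (fun n => ∫ ω, f (X n ω) ∂P) atTop (𝓝 (∫ ω, f (Y ω) ∂P')) := by
  let P₀ : ProbabilityMeasure Ω := ⟨P, ‹_›⟩
  let P₀' : ProbabilityMeasure Ω' := ⟨P', ‹_›⟩
  have hfdd' (F : Finset C) :
      Tendsto (fun n => finiteDimDistrib ℝ (P₀.map (hXmeas n).aemeasurable) F) atTop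
        (𝓝 (finiteDimDistrib ℝ (P₀'.map hYmeas.aemeasurable) F)) := by
    simp only [finiteDimDistrib_map P₀ (hXmeas _), finiteDimDistrib_map P₀' hYmeas]
    exact (ProbabilityMeasure.tendsto_map_iff_forall_integral_comp_tendsto _ _).2 (hfdd F)
  have hdom' (n : ℕ) (i : C) :
      ∫⁻ x : ℓ¹(C, ℝ), ‖x i‖ₑ ∂(P₀.map (hXmeas n).aemeasurable) ≤ ENNReal.ofReal (u i) := by
    rw [ProbabilityMeasure.toMeasure_map,
      lintegral_map (lp.lipschitzWith_one_eval 1 i).continuous.enorm.measurable (hXmeas n)]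
    simp only [Real.enorm_eq_ofReal_abs]
    exact hdom n i
  exact (ProbabilityMeasure.tendsto_map_iff_forall_integral_comp_tendsto _ _).1
    (tendsto_of_tendsto_finiteDimDistrib_of_lintegral_enorm_le hfdd' hu.tsum_ofReal_ne_top hdom')
end

section
/- For t ≥ 2 define m_t : Δ^∞ → ℝ by m_t(x) = Σ_j x_j^t. Then: (i) if a, b ∈ Δ^∞ satisfy m_t(a) = m_t(b) for all t ≥ 2, then a = b; (ii) each m_t (t ≥ 2) is continuous on Δ^∞; (iii) if a_1, a_2, …, a ∈ Δ^∞ are such that m_t(a_n) → m_t(a) as n → ∞ for every t ≥ 2, then a_n → a in Δ^∞ (pointwise). -/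
open Filter Topology

/-- The infinite-dimensional simplex `Δ^∞` of nonincreasing sequences in `[0,1]` whose sum is
at most `1` (expressed through partial sums), endowed with the topology of pointwise
convergence (the subspace topology of the product topology). -/
abbrev DeltaInf : Type :=
  {x : ℕ → ℝ // (∀ j, x j ∈ Set.Icc (0 : ℝ) 1) ∧ (∀ j, x (j + 1) ≤ x j) ∧
    ∀ m : ℕ, ∑ j ∈ Finset.range m, x j ≤ 1}

/-- For `t ≥ 2`, the function `m_t : Δ^∞ → ℝ`, `m_t(x) = Σ_j x_j^t`. -/
noncomputable def mpow (t : ℕ) (x : DeltaInf) : ℝ := ∑' j : ℕ, (x.1 j) ^ t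

lemma dnonneg (x : DeltaInf) (j : ℕ) : 0 ≤ x.1 j := (x.2.1 j).1
lemma dle1 (x : DeltaInf) (j : ℕ) : x.1 j ≤ 1 := (x.2.1 j).2
lemma dmono (x : DeltaInf) : ∀ {i j : ℕ}, i ≤ j → x.1 j ≤ x.1 i := by
  intro i j h
  induction h with
  | refl => exact le_refl _
  | step h ih => exact le_trans (x.2.2.1 _) ih

lemma dsummable (x : DeltaInf) : Summable x.1 :=
  summable_of_sum_range_le (fun j => dnonneg x j) x.2.2.2

lemma dtsum_le_one (x : DeltaInf) : ∑' j, x.1 j ≤ 1 :=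
  Summable.tsum_le_of_sum_range_le (dsummable x) x.2.2.2

lemma pow_summable (x : DeltaInf) (t : ℕ) (ht : 1 ≤ t) : Summable (fun j => (x.1 j) ^ t) := by
  refine (dsummable x).of_nonneg_of_le (fun j => pow_nonneg (dnonneg x j) t) (fun j => ?_)
  calc (x.1 j) ^ t ≤ (x.1 j) ^ 1 := pow_le_pow_of_le_one (dnonneg x j) (dle1 x j) ht
  _ = x.1 j := pow_one _

lemma dbound (x : DeltaInf) (j : ℕ) : x.1 j ≤ 1 / (j + 1) := by
  rw [le_div_iff₀ (by positivity)]
  calc x.1 j * (j + 1) = ∑ i ∈ Finset.range (j+1), x.1 j := by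
        simp [mul_comm]
  _ ≤ ∑ i ∈ Finset.range (j+1), x.1 i := by
        refine Finset.sum_le_sum fun i hi => dmono x ?_
        exact Nat.le_of_lt_succ (Finset.mem_range.mp hi)
  _ ≤ 1 := x.2.2.2 _

lemma head_pow_le (a : DeltaInf) (t : ℕ) (ht : 1 ≤ t) : (a.1 0) ^ t ≤ mpow t a :=
  Summable.le_tsum (pow_summable a t ht) 0 (fun j _ => pow_nonneg (dnonneg a j) t)

lemma mpow_le (b : DeltaInf) (t : ℕ) (ht : 2 ≤ t) : mpow t b ≤ (b.1 0) ^ (t - 2) := by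
  have h1 : mpow t b ≤ (b.1 0) ^ (t-2) * ∑' j, b.1 j := by
    rw [← tsum_mul_left]
    refine Summable.tsum_le_tsum (fun j => ?_) (pow_summable b t (by omega)) ((dsummable b).mul_left _)
    calc (b.1 j) ^ t = (b.1 j) ^ (t - 2) * (b.1 j) ^ 2 := by
          rw [← pow_add]; congr 1; omega
    _ ≤ (b.1 0) ^ (t - 2) * b.1 j := by
          refine mul_le_mul (pow_le_pow_left₀ (dnonneg b j) (dmono b (Nat.zero_le j)) _) ?_
            (pow_nonneg (dnonneg b j) 2) (pow_nonneg (dnonneg b 0) _)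
          calc (b.1 j)^2 ≤ (b.1 j)^1 := pow_le_pow_of_le_one (dnonneg b j) (dle1 b j) one_le_two
          _ = b.1 j := pow_one _
  calc mpow t b ≤ (b.1 0) ^ (t-2) * ∑' j, b.1 j := h1
  _ ≤ (b.1 0) ^ (t-2) * 1 := by
        exact mul_le_mul_of_nonneg_left (dtsum_le_one b) (pow_nonneg (dnonneg b 0) _)
  _ = _ := mul_one _

lemma head_le (a b : DeltaInf) (h : ∀ t : ℕ, 2 ≤ t → mpow t a ≤ mpow t b) :
    a.1 0 ≤ b.1 0 := by
  by_contra hc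
  push_neg at hc
  have key : ∀ t : ℕ, 2 ≤ t → (a.1 0) ^ t ≤ (b.1 0) ^ (t - 2) := fun t ht =>
    le_trans (head_pow_le a t (by omega)) (le_trans (h t ht) (mpow_le b t ht))
  rcases eq_or_lt_of_le (dnonneg b 0) with hb0 | hb0
  · have := key 3 (by norm_num)
    rw [← hb0] at this
    simp at this
    have ha : 0 < a.1 0 := by rw [← hb0] at hc; exact hc
    nlinarith [pow_pos ha 3]
  · have hr : 1 < a.1 0 / b.1 0 := (one_lt_div hb0).mpr hc
    obtain ⟨t, ht1, ht2⟩ := ((tendsto_pow_atTop_atTop_of_one_lt hr).eventually_gt_atTop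
      (1 / (b.1 0)^2)).and (eventually_ge_atTop 2) |>.exists
    have h2 : (b.1 0) ^ (t - 2) * (b.1 0)^2 = (b.1 0)^t := by rw [← pow_add]; congr 1; omega
    have h3 : (a.1 0)^t = (a.1 0 / b.1 0)^t * (b.1 0)^t := by
      rw [div_pow, div_mul_cancel₀ _ (pow_ne_zero t (ne_of_gt hb0))]
    have h4 : 1 / (b.1 0)^2 * (b.1 0)^t < (a.1 0 / b.1 0)^t * (b.1 0)^t := by
      exact mul_lt_mul_of_pos_right ht1 (by positivity)
    have h5 : 1 / (b.1 0)^2 * (b.1 0)^t = (b.1 0)^(t-2) := by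
      field_simp
      linarith [h2]
    nlinarith [key t ht2]

def dshift (x : DeltaInf) : DeltaInf :=
  ⟨fun j => x.1 (j + 1), fun j => x.2.1 (j+1), fun j => x.2.2.1 (j+1), by
    intro m
    calc ∑ j ∈ Finset.range m, x.1 (j+1) ≤ ∑ j ∈ Finset.range (m+1), x.1 j := by
          rw [Finset.sum_range_succ']
          simpa using dnonneg x 0
    _ ≤ 1 := x.2.2.2 _⟩

lemma mpow_dshift (x : DeltaInf) (t : ℕ) (ht : 2 ≤ t) :
    mpow t (dshift x) = mpow t x - (x.1 0) ^ t := by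
  have := Summable.tsum_eq_zero_add (pow_summable x t (by omega))
  unfold mpow dshift
  simp only
  linarith [this]

lemma head_eq (a b : DeltaInf) (h : ∀ t : ℕ, 2 ≤ t → mpow t a = mpow t b) :
    a.1 0 = b.1 0 :=
  le_antisymm (head_le a b fun t ht => (h t ht).le)
    (head_le b a fun t ht => (h t ht).ge)

lemma sep (a b : DeltaInf) (h : ∀ t : ℕ, 2 ≤ t → mpow t a = mpow t b) : a = b := by
  have key : ∀ k : ℕ, ∀ a b : DeltaInf, (∀ t : ℕ, 2 ≤ t → mpow t a = mpow t b) →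
      a.1 k = b.1 k := by
    intro k
    induction k with
    | zero => exact fun a b h => head_eq a b h
    | succ k ih =>
      intro a b h
      have h0 : a.1 0 = b.1 0 := head_eq a b h
      have : ∀ t : ℕ, 2 ≤ t → mpow t (dshift a) = mpow t (dshift b) := by
        intro t ht
        rw [mpow_dshift a t ht, mpow_dshift b t ht, h t ht, h0]
      exact ih (dshift a) (dshift b) this
  exact Subtype.ext (funext fun k => key k a b h)

lemma mpow_continuous (t : ℕ) (ht : 2 ≤ t) : Continuous (mpow t) := by
  apply continuous_tsum (u := fun j : ℕ => (1 / ((j : ℝ) + 1)) ^ 2)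
  · exact fun j => ((continuous_apply j).comp continuous_subtype_val).pow t
  · have := Real.summable_one_div_nat_rpow (p := 2)
    simp only [one_div]
    have h : Summable (fun j : ℕ => ((j : ℝ) + 1)⁻¹ ^ 2) := by
      have := (summable_nat_add_iff 1).mpr (Real.summable_one_div_nat_pow.mpr one_lt_two)
      simpa [one_div] using this
    exact h
  · intro j x
    rw [Real.norm_eq_abs, abs_of_nonneg (pow_nonneg (dnonneg x j) t)]
    have h1 : (0:ℝ) ≤ 1 / ((j:ℝ)+1) := by positivity
    have h2 : 1 / ((j:ℝ)+1) ≤ 1 := by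
      rw [div_le_one (by positivity)]; linarith [Nat.cast_nonneg (α := ℝ) j]
    calc (x.1 j) ^ t ≤ (1 / ((j:ℝ)+1)) ^ t :=
          pow_le_pow_left₀ (dnonneg x j) (dbound x j) t
    _ ≤ (1 / ((j:ℝ)+1)) ^ 2 := pow_le_pow_of_le_one h1 h2 ht

instance : CompactSpace DeltaInf := by
  have hc : IsCompact {x : ℕ → ℝ | (∀ j, x j ∈ Set.Icc (0 : ℝ) 1) ∧ (∀ j, x (j + 1) ≤ x j) ∧
      ∀ m : ℕ, ∑ j ∈ Finset.range m, x j ≤ 1} := by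
    apply IsCompact.of_isClosed_subset
      (isCompact_univ_pi (fun _ : ℕ => isCompact_Icc (a := (0:ℝ)) (b := 1)))
    · rw [Set.setOf_and, Set.setOf_and]
      refine IsClosed.inter ?_ (IsClosed.inter ?_ ?_)
      · rw [Set.setOf_forall]
        exact isClosed_iInter fun j => (isClosed_Icc).preimage (continuous_apply j)
      · rw [Set.setOf_forall]
        exact isClosed_iInter fun j =>
          isClosed_le (continuous_apply (j+1)) (continuous_apply j)
      · rw [Set.setOf_forall]
        exact isClosed_iInter fun m =>
          isClosed_le (by continuity) continuous_const
    · intro x hx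
      exact fun j _ => hx.1 j
  exact isCompact_iff_compactSpace.mp hc

instance : FirstCountableTopology DeltaInf :=
  IsInducing.firstCountableTopology IsInducing.subtypeVal

lemma part3 (a : ℕ → DeltaInf) (b : DeltaInf)
    (h : ∀ t : ℕ, 2 ≤ t → Tendsto (fun n => mpow t (a n)) atTop (𝓝 (mpow t b))) :
    Tendsto a atTop (𝓝 b) := by
  apply tendsto_of_subseq_tendsto
  intro ns hns
  obtain ⟨c, -, φ, hφ, hc⟩ := IsCompact.tendsto_subseq (x := fun n => a (ns n))
    isCompact_univ (fun n => Set.mem_univ _)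
  have hcb : c = b := by
    apply sep
    intro t ht
    have h1 : Tendsto (fun n => mpow t (a (ns (φ n)))) atTop (𝓝 (mpow t c)) :=
      ((mpow_continuous t ht).continuousAt.tendsto).comp hc
    have h2 : Tendsto (fun n => mpow t (a (ns (φ n)))) atTop (𝓝 (mpow t b)) :=
      (h t ht).comp (hns.comp hφ.tendsto_atTop)
    exact tendsto_nhds_unique h1 h2
  exact ⟨φ, hcb ▸ hc⟩


/-- (i) points of `Δ^∞` are separated by the functions `m_t`, `t ≥ 2`;
(ii) each `m_t`, `t ≥ 2`, is continuous on `Δ^∞`; (iii) if `m_t(a_n) → m_t(a)` for every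
`t ≥ 2` then `a_n → a` in `Δ^∞` (pointwise). -/
theorem stmt17 :
    (∀ a b : DeltaInf, (∀ t : ℕ, 2 ≤ t → mpow t a = mpow t b) → a = b) ∧
    (∀ t : ℕ, 2 ≤ t → Continuous (mpow t)) ∧
    (∀ (a : ℕ → DeltaInf) (b : DeltaInf),
      (∀ t : ℕ, 2 ≤ t → Tendsto (fun n => mpow t (a n)) atTop (𝓝 (mpow t b))) →
      Tendsto a atTop (𝓝 b)) :=
  ⟨sep, mpow_continuous, part3⟩
end

section
/- Let X_1, X_2, …, Z be random variables taking values in Δ^∞. Then X_n converges in distribution to Z if and only if for every r ∈ ℕ* and all integers t_1, …, t_r ≥ 2, E(m_{t_1}(X_n) ⋯ m_{t_r}(X_n)) → E(m_{t_1}(Z) ⋯ m_{t_r}(Z)) as n → ∞. -/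
open Filter Topology MeasureTheory
open scoped BoundedContinuousFunction

/-!
`Δ^∞` is compact, and for `t ≥ 2` the power sum `m_t` is continuous on it, because
`x_j ≤ 1/j` gives the summable majorant `1/j^2`. The `m_t` separate points: since
`x_1^t ≤ m_t(x)` and `m_t(y) ≤ y_1^(t-2) m_2(y)`, equal power sums force `x_1 = y_1` as `t → ∞`;
removing the first coordinate and repeating recovers the whole sequence. By Stone–Weierstrass
the algebra generated by the `m_t` is dense in `C(Δ^∞, ℝ)`, and convergence of expectations
passes from it to every continuous function because `g ↦ E g(X)` is 1-Lipschitz for the sup norm.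
-/

section PowerSums

theorem le_of_forall_pow_add_two_le_mul_pow {a b C : ℝ} (hb : 0 ≤ b)
    (h : ∀ t : ℕ, a ^ (t + 2) ≤ C * b ^ t) : a ≤ b := by
  by_contra! hba
  have ha : 0 < a := hb.trans_lt hba
  have hlim : Tendsto (fun t : ℕ => C * (b / a) ^ t) atTop (𝓝 0) := by
    simpa using (tendsto_pow_atTop_nhds_zero_of_lt_one (div_nonneg hb ha.le)
      ((div_lt_one ha).mpr hba)).const_mul C
  obtain ⟨t, ht⟩ := (hlim.eventually (gt_mem_nhds (pow_pos ha 2))).exists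
  have hat : 0 < a ^ t := pow_pos ha t
  rw [div_pow, ← mul_div_assoc, div_lt_iff₀ hat, ← pow_add, add_comm] at ht
  exact (h t).not_gt ht

variable {x y : ℕ → ℝ}

theorem head_le_of_tsum_pow_eq (hx : ∀ j, 0 ≤ x j) (hy : ∀ j, 0 ≤ y j) (hya : Antitone y)
    (hxs : ∀ t, 2 ≤ t → Summable fun j => x j ^ t) (hys : ∀ t, 2 ≤ t → Summable fun j => y j ^ t)
    (h : ∀ t, 2 ≤ t → ∑' j, x j ^ t = ∑' j, y j ^ t) : x 0 ≤ y 0 := by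
  refine le_of_forall_pow_add_two_le_mul_pow (C := ∑' j, y j ^ 2) (hy 0) fun t => ?_
  have hyt : ∀ j, y j ^ (t + 2) ≤ y 0 ^ t * y j ^ 2 := fun j => by
    rw [pow_add]
    exact mul_le_mul_of_nonneg_right (pow_le_pow_left₀ (hy j) (hya (Nat.zero_le j)) t)
      (sq_nonneg _)
  calc x 0 ^ (t + 2) ≤ ∑' j, x j ^ (t + 2) :=
        (hxs _ (by omega)).le_tsum 0 fun j _ => pow_nonneg (hx j) _
    _ = ∑' j, y j ^ (t + 2) := h _ (by omega)
    _ ≤ ∑' j, y 0 ^ t * y j ^ 2 :=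
        Summable.tsum_le_tsum hyt (hys _ (by omega)) ((hys 2 le_rfl).mul_left _)
    _ = (∑' j, y j ^ 2) * y 0 ^ t := by rw [tsum_mul_left, mul_comm]

theorem eq_of_tsum_pow_eq (hx : ∀ j, 0 ≤ x j) (hy : ∀ j, 0 ≤ y j) (hxa : Antitone x)
    (hya : Antitone y) (hxs : ∀ t, 2 ≤ t → Summable fun j => x j ^ t)
    (hys : ∀ t, 2 ≤ t → Summable fun j => y j ^ t)
    (h : ∀ t, 2 ≤ t → ∑' j, x j ^ t = ∑' j, y j ^ t) : x = y := by
  funext k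
  induction k using Nat.strong_induction_on with
  | _ k ih =>
    have htail : ∀ t, 2 ≤ t → ∑' j, x (j + k) ^ t = ∑' j, y (j + k) ^ t := fun t ht => by
      have hx' := (hxs t ht).sum_add_tsum_nat_add k
      have hy' := (hys t ht).sum_add_tsum_nat_add k
      rw [Finset.sum_congr rfl fun j hj => by rw [ih j (Finset.mem_range.mp hj)], h t ht,
        ← hy'] at hx'
      exact add_left_cancel hx'
    have hshift {z : ℕ → ℝ} (hz : Antitone z) : Antitone fun j => z (j + k) :=
      fun i j hij => hz (by omega)
    have hsum {z : ℕ → ℝ} (hz : ∀ t, 2 ≤ t → Summable fun j => z j ^ t) :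
        ∀ t, 2 ≤ t → Summable fun j => z (j + k) ^ t :=
      fun t ht => (summable_nat_add_iff k).mpr (hz t ht)
    have hle := head_le_of_tsum_pow_eq (fun j => hx (j + k)) (fun j => hy (j + k))
      (hshift hya) (hsum hxs) (hsum hys) htail
    have hge := head_le_of_tsum_pow_eq (fun j => hy (j + k)) (fun j => hx (j + k))
      (hshift hxa) (hsum hys) (hsum hxs) fun t ht => (htail t ht).symm
    rw [zero_add] at hle hge
    exact hle.antisymm hge

end PowerSums

section StoneWeierstrassCriterion

variable {K : Type*} [TopologicalSpace K] [MeasurableSpace K] [OpensMeasurableSpace K]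

theorem ContinuousMap.integral_map {Ω : Type*} [MeasurableSpace Ω] (P : Measure Ω) {T : Ω → K}
    (hT : Measurable T) (g : C(K, ℝ)) : ∫ x, g x ∂P.map T = ∫ ω, g (T ω) ∂P :=
  MeasureTheory.integral_map hT.aemeasurable g.continuous.aestronglyMeasurable

variable [CompactSpace K]

theorem ContinuousMap.integrable (g : C(K, ℝ)) (μ : Measure K) [IsFiniteMeasure μ] :
    Integrable g μ :=
  (BoundedContinuousFunction.mkOfCompact g).integrable μ

theorem lipschitzWith_integral_continuousMap (μ : Measure K) [IsProbabilityMeasure μ] :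
    LipschitzWith 1 fun g : C(K, ℝ) => ∫ x, g x ∂μ := by
  refine LipschitzWith.of_dist_le_mul fun g h => ?_
  rw [NNReal.coe_one, one_mul, dist_eq_norm, dist_eq_norm,
    ← integral_sub (g.integrable μ) (h.integrable μ)]
  simpa using norm_integral_le_of_norm_le_const (μ := μ)
    (ae_of_all _ fun x => (g - h).norm_coe_le_norm x)

variable {ι : Type*} (l : Filter ι) (μ : ι → Measure K) (ν : Measure K)
  [∀ i, IsProbabilityMeasure (μ i)] [IsProbabilityMeasure ν]

def tendstoIntegralSubmodule : Submodule ℝ C(K, ℝ) where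
  carrier := {g | Tendsto (fun i => ∫ x, g x ∂μ i) l (𝓝 (∫ x, g x ∂ν))}
  zero_mem' := by simpa using tendsto_const_nhds
  add_mem' {g h} hg hh := by
    simpa only [Set.mem_ofPred_eq, ContinuousMap.add_apply,
      integral_add (g.integrable _) (h.integrable _)] using hg.add hh
  smul_mem' c g hg := by
    simpa only [Set.mem_ofPred_eq, ContinuousMap.smul_apply, smul_eq_mul, integral_const_mul]
      using hg.const_mul c

theorem isClosed_tendstoIntegralSubmodule :
    IsClosed (tendstoIntegralSubmodule l μ ν : Set C(K, ℝ)) :=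
  (LipschitzWith.uniformEquicontinuous _ 1 fun i =>
    lipschitzWith_integral_continuousMap (μ i)).equicontinuous.isClosed_setOfPred_tendsto
    (lipschitzWith_integral_continuousMap ν).continuous

theorem tendsto_integral_of_tendsto_integral_prod {κ : Type*} (M : κ → C(K, ℝ))
    (hM : (Algebra.adjoin ℝ (Set.range M)).SeparatesPoints)
    (h : ∀ (r : ℕ) (t : Fin r → κ),
      Tendsto (fun i => ∫ x, (∏ s, M (t s)) x ∂μ i) l (𝓝 (∫ x, (∏ s, M (t s)) x ∂ν)))
    (f : C(K, ℝ)) : Tendsto (fun i => ∫ x, f x ∂μ i) l (𝓝 (∫ x, f x ∂ν)) := by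
  have hprod :
      (Submonoid.closure (Set.range M) : Set C(K, ℝ)) ⊆ tendstoIntegralSubmodule l μ ν := by
    intro g hg
    obtain ⟨L, hL, rfl⟩ := Submonoid.exists_list_of_mem_closure hg
    choose t ht using fun s : Fin L.length => hL _ (L.getElem_mem s.2)
    have hL : L.prod = ∏ s, M (t s) := by simp only [ht, ← List.prod_ofFn, List.ofFn_getElem]
    simpa [hL, tendstoIntegralSubmodule] using h _ t
  have hA : (Algebra.adjoin ℝ (Set.range M) : Set C(K, ℝ)) ⊆ tendstoIntegralSubmodule l μ ν := by
    rw [← Subalgebra.coe_toSubmodule, Algebra.adjoin_eq_span]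
    exact Submodule.span_le.mpr hprod
  have hdense := ContinuousMap.subalgebra_topologicalClosure_eq_top_of_separatesPoints _ hM
  have hclosure := (isClosed_tendstoIntegralSubmodule l μ ν).closure_subset_iff.mpr hA
  rw [← Subalgebra.topologicalClosure_coe, hdense] at hclosure
  exact hclosure (Set.mem_univ f)

end StoneWeierstrassCriterion

namespace DeltaInf

section

variable (x : DeltaInf)

theorem nonneg (j : ℕ) : 0 ≤ x.1 j := (x.2.1 j).1

theorem le_one (j : ℕ) : x.1 j ≤ 1 := (x.2.1 j).2

theorem antitone : Antitone x.1 := antitone_nat_of_succ_le x.2.2.1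

theorem summable : Summable x.1 := summable_of_sum_range_le x.nonneg x.2.2.2

theorem summable_pow {t : ℕ} (ht : 1 ≤ t) : Summable fun j => x.1 j ^ t :=
  x.summable.of_nonneg_of_le (fun j => pow_nonneg (x.nonneg j) t)
    fun j => pow_le_of_le_one (x.nonneg j) (x.le_one j) (by omega)

theorem le_inv_succ (j : ℕ) : x.1 j ≤ ((j : ℝ) + 1)⁻¹ := by
  have hsum : ((j : ℝ) + 1) * x.1 j ≤ 1 := by
    calc ((j : ℝ) + 1) * x.1 j = ∑ _i ∈ Finset.range (j + 1), x.1 j := by simp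
      _ ≤ ∑ i ∈ Finset.range (j + 1), x.1 i :=
        Finset.sum_le_sum fun i hi => x.antitone (Finset.mem_range_succ_iff.mp hi)
      _ ≤ 1 := x.2.2.2 _
  rwa [← one_div, le_div_iff₀' (by positivity)]

end

instance : CompactSpace DeltaInf := by
  refine isCompact_iff_compactSpace.mp <|
    (isCompact_univ_pi fun _ => isCompact_Icc).of_isClosed_subset ?_ fun x hx j _ => hx.1 j
  change IsClosed {x | _}
  simp only [Set.ofPred_and, Set.ofPred_forall]
  exact (isClosed_iInter fun j => isClosed_Icc.preimage (continuous_apply j)).inter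
    ((isClosed_iInter fun j => isClosed_le (continuous_apply (j + 1)) (continuous_apply j)).inter
      (isClosed_iInter fun m => isClosed_le
        (continuous_finsetSum _ fun j _ => continuous_apply j) continuous_const))

theorem ext_of_mpow {x y : DeltaInf} (h : ∀ t, 2 ≤ t → mpow t x = mpow t y) : x = y :=
  Subtype.ext <| eq_of_tsum_pow_eq x.nonneg y.nonneg x.antitone y.antitone
    (fun t ht => x.summable_pow (by omega)) (fun t ht => y.summable_pow (by omega)) h

end DeltaInf

theorem continuous_mpow {t : ℕ} (ht : 2 ≤ t) : Continuous (mpow t) := by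
  refine continuous_tsum (u := fun j : ℕ => (((j : ℝ) + 1) ^ 2)⁻¹)
    (fun j => ((continuous_apply j).comp continuous_subtype_val).pow t) ?_ fun j x => ?_
  · exact_mod_cast (summable_nat_add_iff 1).mpr (Real.summable_nat_pow_inv.mpr one_lt_two)
  · rw [Real.norm_eq_abs, abs_of_nonneg (pow_nonneg (x.nonneg j) t), ← inv_pow]
    calc x.1 j ^ t ≤ x.1 j ^ 2 := pow_le_pow_of_le_one (x.nonneg j) (x.le_one j) ht
      _ ≤ ((j : ℝ) + 1)⁻¹ ^ 2 := pow_le_pow_left₀ (x.nonneg j) (x.le_inv_succ j) 2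

noncomputable def mpowContinuousMap (t : {t : ℕ // 2 ≤ t}) : C(DeltaInf, ℝ) :=
  ⟨mpow t, continuous_mpow t.2⟩

theorem separatesPoints_adjoin_mpow :
    (Algebra.adjoin ℝ (Set.range mpowContinuousMap)).SeparatesPoints := by
  intro x y hxy
  obtain ⟨t, ht, hne⟩ : ∃ t, 2 ≤ t ∧ mpow t x ≠ mpow t y := by
    by_contra! h
    exact hxy (DeltaInf.ext_of_mpow h)
  exact ⟨_, ⟨_, Algebra.subset_adjoin ⟨⟨t, ht⟩, rfl⟩, rfl⟩, hne⟩

/-- for `Δ^∞`-valued random variables `X_n` and `Z`, convergence in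
distribution of `X_n` to `Z` (tested against all bounded continuous functions on `Δ^∞`) is
equivalent to the convergence `E(m_{t_1}(X_n) ⋯ m_{t_r}(X_n)) → E(m_{t_1}(Z) ⋯ m_{t_r}(Z))`
for all `r ≥ 1` and all `t_1, …, t_r ≥ 2`. -/
theorem stmt18 {Ω Ω' : Type*} [MeasurableSpace Ω] [MeasurableSpace Ω']
    (ℙ : Measure Ω) (ℙ' : Measure Ω') [IsProbabilityMeasure ℙ] [IsProbabilityMeasure ℙ']
    (X : ℕ → Ω → DeltaInf) (Z : Ω' → DeltaInf)
    (hX : ∀ n, Measurable (X n)) (hZ : Measurable Z) :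
    (∀ f : DeltaInf →ᵇ ℝ,
        Tendsto (fun n => ∫ ω, f (X n ω) ∂ℙ) atTop (𝓝 (∫ ω, f (Z ω) ∂ℙ'))) ↔
      (∀ (r : ℕ), 1 ≤ r → ∀ (t : Fin r → ℕ), (∀ s, 2 ≤ t s) →
        Tendsto (fun n => ∫ ω, ∏ s, mpow (t s) (X n ω) ∂ℙ) atTop
          (𝓝 (∫ ω, ∏ s, mpow (t s) (Z ω) ∂ℙ'))) := by
  constructor
  · intro H r _ t ht
    exact H (BoundedContinuousFunction.mkOfCompact
      ⟨fun x => ∏ s, mpow (t s) x, continuous_finsetProd _ fun s _ => continuous_mpow (ht s)⟩)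
  · intro H f
    have := fun n => Measure.isProbabilityMeasure_map (μ := ℙ) (hX n).aemeasurable
    have := Measure.isProbabilityMeasure_map (μ := ℙ') hZ.aemeasurable
    have hprod (r : ℕ) (t : Fin r → {t : ℕ // 2 ≤ t}) :
        Tendsto (fun n => ∫ x, (∏ s, mpowContinuousMap (t s)) x ∂ℙ.map (X n)) atTop
          (𝓝 (∫ x, (∏ s, mpowContinuousMap (t s)) x ∂ℙ'.map Z)) := by
      simp only [ContinuousMap.integral_map, hX, hZ]
      simp only [ContinuousMap.coe_prod, Finset.prod_apply, mpowContinuousMap, ContinuousMap.coe_mk]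
      rcases r.eq_zero_or_pos with rfl | hr
      · simp
      · exact H r hr _ fun s => (t s).2
    have key := tendsto_integral_of_tendsto_integral_prod atTop (fun n => ℙ.map (X n)) (ℙ'.map Z)
      _ separatesPoints_adjoin_mpow hprod f.toContinuousMap
    simp only [ContinuousMap.integral_map, hX, hZ] at key
    exact key
end

section
/- Let C_j^{(n)} be the number of cycles of length j of a uniform random permutation of {1,…,n}. For pairwise distinct k_1,…,k_s ≥ 1 and integers r_1,…,r_s ≥ 1, E((C_{k_1}^{(n)})^{r_1} ⋯ (C_{k_s}^{(n)})^{r_s}) = Σ_{m_1=1}^{r_1} ⋯ Σ_{m_s=1}^{r_s} (1/(k_1^{m_1} ⋯ k_s^{m_s})) · S(r_1,m_1) ⋯ S(r_s,m_s) · 1{ k_1 m_1 + ⋯ + k_s m_s ≤ n }, where S(r,m) is the Stirling number of the second kind (the number of partitions of a set of r elements into m nonempty unordered blocks). -/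
/-!
Expanding `x ^ r = ∑ₘ S(r, m) · x (x - 1) ⋯ (x - m + 1)` reduces the moments to factorial moments,
and the theorem to the identity `∏ₜ kₜ ^ mₜ · ∑_σ ∏ₜ (C_{kₜ}(σ))_{mₜ} = n! · 1{K ≤ n}`, where
`K = ∑ₜ kₜ mₜ`. Both sides count the pairs `(σ, f)` in which `f` marks one point on each of
`∑ₜ mₜ` distinct cycles of `σ`, `mₜ` of them of length `kₜ`. For fixed `σ` there are
`(C_{kₜ})_{mₜ}` ordered choices of the cycles of length `kₜ` and `kₜ` choices of the marked point
on each. On the other hand `(σ, f)` amounts to the injection `(p, j) ↦ σ ^ j (f p)` of the disjoint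
union of the cycles `ℤ/kₜ` (`K` points) into `Fin n`, together with an arbitrary permutation of the
`n - K` points outside its image; there are `n (n - 1) ⋯ (n - K + 1) · (n - K)! = n!` of those
when `K ≤ n`, and none otherwise.
-/

/-- The number of cycles of length `j` of a permutation `σ` of `Fin n` (fixed points counting
as cycles of length `1`): the number of points lying on a cycle of length `j`, divided by `j`. -/
noncomputable def numCycles {n : ℕ} (σ : Equiv.Perm (Fin n)) (j : ℕ) : ℕ :=
  Set.ncard {x : Fin n | Function.minimalPeriod σ x = j} / j

/-- The Stirling numbers of the second kind `S(r, m)`, the number of partitions of a set of `r`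
elements into `m` nonempty unordered blocks, defined by the standard recurrence
`S(r+1, m+1) = (m+1) S(r, m+1) + S(r, m)`. -/
def stirling2 : ℕ → ℕ → ℕ
  | 0, 0 => 1
  | 0, _ + 1 => 0
  | _ + 1, 0 => 0
  | r + 1, m + 1 => (m + 1) * stirling2 r (m + 1) + stirling2 r m

open Finset Function Equiv Fin.NatCast

theorem stirling2_eq_stirlingSecond : stirling2 = Nat.stirlingSecond := by
  funext r m
  induction r generalizing m with
  | zero => cases m <;> rfl
  | succ r ih => cases m <;> simp [stirling2, Nat.stirlingSecond, ih]

namespace Nat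

theorem mul_descFactorial (x m : ℕ) :
    x * x.descFactorial m = x.descFactorial (m + 1) + m * x.descFactorial m := by
  rcases le_or_gt m x with h | h
  · rw [descFactorial_succ, ← add_mul, Nat.sub_add_cancel h]
  · simp [descFactorial_eq_zero_iff_lt.2 h]

theorem pow_eq_sum_stirlingSecond_mul_descFactorial (x r : ℕ) :
    x ^ r = ∑ m ∈ range (r + 1), stirlingSecond r m * x.descFactorial m := by
  induction r with
  | zero => simp
  | succ r ih =>
    have hshift : ∑ m ∈ range (r + 1), stirlingSecond r m * (m * x.descFactorial m) =
        ∑ m ∈ range (r + 1), (m + 1) * stirlingSecond r (m + 1) * x.descFactorial (m + 1) := by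
      rw [sum_range_succ', sum_range_succ, stirlingSecond_eq_zero_of_lt (lt_add_one r)]
      simp only [mul_zero, zero_mul, add_zero]
      exact sum_congr rfl fun m _ => by ring
    calc x ^ (r + 1)
        = ∑ m ∈ range (r + 1), stirlingSecond r m *
            (x.descFactorial (m + 1) + m * x.descFactorial m) := by
          rw [pow_succ', ih, mul_sum]
          exact sum_congr rfl fun m _ => by rw [mul_left_comm, mul_descFactorial]
      _ = ∑ m ∈ range (r + 2), stirlingSecond (r + 1) m * x.descFactorial m := by
          rw [sum_range_succ' _ (r + 1)]
          simp only [mul_add, sum_add_distrib, hshift, stirlingSecond_succ_succ, add_mul,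
            stirlingSecond_succ_zero, zero_mul]
          ring

theorem pow_eq_sum_fin_stirlingSecond_mul_descFactorial (x : ℕ) {r : ℕ} (hr : r ≠ 0) :
    x ^ r = ∑ m : Fin r, stirlingSecond r (m + 1) * x.descFactorial (m + 1) := by
  obtain ⟨r, rfl⟩ := exists_eq_succ_of_ne_zero hr
  rw [pow_eq_sum_stirlingSecond_mul_descFactorial, sum_range_succ', Fin.sum_univ_eq_sum_range
    (fun m => stirlingSecond (r + 1) (m + 1) * x.descFactorial (m + 1))]
  simp

end Nat

theorem finRotate_iterate_apply {n : ℕ} [NeZero n] (a : ℕ) (i : Fin n) :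
    (finRotate n)^[a] i = i + (a : Fin n) := by
  induction a with
  | zero => simp
  | succ a ih => rw [iterate_succ_apply', ih, finRotate_apply, Nat.cast_succ, add_assoc]

theorem minimalPeriod_finRotate {n : ℕ} (i : Fin n) : minimalPeriod (finRotate n) i = n := by
  have := i.neZero
  refine Nat.dvd_right_iff_eq.1 fun a => ?_
  rw [← isPeriodicPt_iff_minimalPeriod_dvd, IsPeriodicPt, IsFixedPt, finRotate_iterate_apply,
    add_eq_left, Fin.natCast_eq_zero]

theorem Function.Semiconj.minimalPeriod_eq {α β : Type*} {g : β → α} {ρ : β → β} {σ : α → α}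
    (h : Semiconj g ρ σ) (hg : Injective g) (x : β) :
    minimalPeriod σ (g x) = minimalPeriod ρ x :=
  minimalPeriod_eq_minimalPeriod_iff.2 fun n => by
    rw [IsPeriodicPt, IsFixedPt, ← (h.iterate_right n).eq, hg.eq_iff]; rfl

theorem Function.Semiconj.apply_mem_range_iff {α β : Type*} {g : β → α} {ρ : Perm β}
    {σ : α → α} (h : Semiconj g ρ σ) (hσ : Injective σ) (x : α) :
    σ x ∈ Set.range g ↔ x ∈ Set.range g := by
  refine ⟨fun ⟨y, hy⟩ => ⟨ρ.symm y, hσ ?_⟩, fun ⟨y, hy⟩ => ⟨ρ y, hy ▸ h.eq y⟩⟩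
  rw [← h.eq, apply_symm_apply, hy]

namespace Equiv.Perm

variable {α : Type*} {σ : Perm α} {x y : α} {j : ℕ}

theorem minimalPeriod_pos [Finite α] (σ : Perm α) (x : α) : 0 < minimalPeriod σ x := by
  refine minimalPeriod_pos_of_mem_periodicPts ⟨orderOf σ, orderOf_pos σ, ?_⟩
  rw [IsPeriodicPt, IsFixedPt, ← coe_pow, pow_orderOf_eq_one, one_apply]

theorem SameCycle.minimalPeriod_eq [Finite α] (h : σ.SameCycle x y) :
    minimalPeriod σ x = minimalPeriod σ y := by
  obtain ⟨i, rfl⟩ := h.exists_nat_pow_eq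
  rw [coe_pow, minimalPeriod_apply_iterate]
  exact minimalPeriod_pos_iff_mem_periodicPts.1 (σ.minimalPeriod_pos x)

variable [Fintype α] [DecidableEq α]

variable (σ) in
def cycleFinset (x : α) : Finset α := {y | σ.SameCycle x y}

@[simp]
theorem mem_cycleFinset : y ∈ σ.cycleFinset x ↔ σ.SameCycle x y := by
  simp [cycleFinset]

theorem cycleFinset_eq_cycleFinset_iff : σ.cycleFinset x = σ.cycleFinset y ↔ σ.SameCycle x y := by
  refine ⟨fun h => mem_cycleFinset.1 (h ▸ mem_cycleFinset.2 (SameCycle.refl σ y)), fun h => ?_⟩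
  ext z
  simp only [mem_cycleFinset]
  exact ⟨h.symm.trans, h.trans⟩

variable (σ) in
theorem card_cycleFinset (x : α) : #(σ.cycleFinset x) = minimalPeriod σ x := by
  have himage : σ.cycleFinset x = (range (minimalPeriod σ x)).image (fun i => σ^[i] x) := by
    ext y
    simp only [mem_cycleFinset, mem_image, mem_range]
    constructor
    · rintro h
      obtain ⟨i, rfl⟩ := h.exists_nat_pow_eq
      exact ⟨i % minimalPeriod σ x, Nat.mod_lt _ (σ.minimalPeriod_pos x),
        by rw [iterate_mod_minimalPeriod_eq, coe_pow]⟩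
    · rintro ⟨i, -, rfl⟩
      rw [← coe_pow]
      exact sameCycle_pow_right.2 (SameCycle.refl σ x)
  rw [himage, card_image_of_injOn, card_range]
  exact fun i hi i' hi' => iterate_injOn_Iio_minimalPeriod (mem_range.1 hi) (mem_range.1 hi')

variable (σ) in
noncomputable def cyclesOfLength (j : ℕ) : Finset (Finset α) :=
  ({x | minimalPeriod σ x = j} : Finset α).image σ.cycleFinset

theorem cycleFinset_mem_cyclesOfLength (h : minimalPeriod σ x = j) :
    σ.cycleFinset x ∈ σ.cyclesOfLength j :=
  mem_image_of_mem _ (by simpa using h)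

theorem eq_cycleFinset_of_mem_cyclesOfLength {c : Finset α} (hc : c ∈ σ.cyclesOfLength j)
    (hy : y ∈ c) : σ.cycleFinset y = c := by
  obtain ⟨x, -, rfl⟩ := mem_image.1 hc
  exact (cycleFinset_eq_cycleFinset_iff.2 (mem_cycleFinset.1 hy)).symm

theorem minimalPeriod_eq_of_mem_cyclesOfLength {c : Finset α} (hc : c ∈ σ.cyclesOfLength j)
    (hy : y ∈ c) : minimalPeriod σ y = j := by
  obtain ⟨x, hx, rfl⟩ := mem_image.1 hc
  rw [← (mem_cycleFinset.1 hy).minimalPeriod_eq]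
  simpa using hx

theorem card_of_mem_cyclesOfLength {c : Finset α} (hc : c ∈ σ.cyclesOfLength j) : #c = j := by
  obtain ⟨x, hx, rfl⟩ := mem_image.1 hc
  rw [card_cycleFinset]
  simpa using hx

variable (σ) in
theorem card_filter_minimalPeriod_eq (j : ℕ) :
    #({x | minimalPeriod σ x = j} : Finset α) = j * #(σ.cyclesOfLength j) := by
  rw [card_eq_sum_card_image σ.cycleFinset, ← cyclesOfLength, mul_comm, ← smul_eq_mul,
    ← sum_const]
  refine sum_congr rfl fun c hc => ?_
  refine (congrArg card ?_).trans (card_of_mem_cyclesOfLength hc)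
  ext y
  simp only [mem_filter, mem_univ, true_and]
  exact ⟨fun h => h.2 ▸ mem_cycleFinset.2 (SameCycle.refl σ y),
    fun hy => ⟨minimalPeriod_eq_of_mem_cyclesOfLength hc hy,
      eq_cycleFinset_of_mem_cyclesOfLength hc hy⟩⟩

theorem disjoint_cyclesOfLength {i j : ℕ} (h : i ≠ j) :
    _root_.Disjoint (σ.cyclesOfLength i) (σ.cyclesOfLength j) :=
  disjoint_left.2 fun _ hi hj => h ((card_of_mem_cyclesOfLength hi).symm.trans
    (card_of_mem_cyclesOfLength hj))

end Equiv.Perm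

section Embedding

variable {ι β : Type*} [Fintype ι] {κ : ι → Type*} [∀ t, Fintype (κ t)] {S : ι → Finset β}

def sigmaEmbeddingMemEquivPi (hS : Pairwise (Disjoint on S)) :
    {c : (Σ t, κ t) ↪ β // ∀ p, c p ∈ S p.1} ≃ ∀ t, κ t ↪ S t where
  toFun c t := ⟨fun i => ⟨c.1 ⟨t, i⟩, c.2 _⟩, fun i i' h =>
    eq_of_heq (Sigma.mk.inj_iff.1 (c.1.injective (congrArg Subtype.val h))).2⟩
  invFun e := ⟨⟨fun p => e p.1 p.2, by
      rintro ⟨t, i⟩ ⟨t', i'⟩ (h : (e t i : β) = e t' i')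
      obtain rfl : t = t' := by
        by_contra hne
        exact disjoint_left.1 (hS hne) (e t i).2 (h ▸ (e t' i').2)
      rw [(e t).injective (Subtype.ext h)]⟩,
    fun p => (e p.1 p.2).2⟩
  left_inv _ := rfl
  right_inv _ := rfl

theorem card_embedding_sigma_of_pairwiseDisjoint (hS : Pairwise (Disjoint on S)) :
    Nat.card {c : (Σ t, κ t) ↪ β // ∀ p, c p ∈ S p.1} =
      ∏ t, (#(S t)).descFactorial (Fintype.card (κ t)) := by
  classical
  rw [Nat.card_congr (sigmaEmbeddingMemEquivPi hS), Nat.card_pi]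
  exact prod_congr rfl fun t _ => by
    rw [Nat.card_eq_fintype_card, Fintype.card_embedding_eq, Fintype.card_coe]

end Embedding

section CycleMarking

open Equiv.Perm

variable {α I : Type*}

def IsCycleMarking (σ : Perm α) (ℓ : I → ℕ) (f : I → α) : Prop :=
  (∀ p, minimalPeriod σ (f p) = ℓ p) ∧ ∀ p q, σ.SameCycle (f p) (f q) → p = q

variable {σ : Perm α} {ℓ : I → ℕ} {f : I → α}

section MarkingsOfOnePermutation

variable [Fintype α] [DecidableEq α]

def IsCycleMarking.markedCycles (hf : IsCycleMarking σ ℓ f) :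
    {c : I ↪ Finset α // ∀ p, c p ∈ σ.cyclesOfLength (ℓ p)} :=
  ⟨⟨fun p => σ.cycleFinset (f p), fun p q h => hf.2 p q (cycleFinset_eq_cycleFinset_iff.1 h)⟩,
    fun p => cycleFinset_mem_cyclesOfLength (hf.1 p)⟩

def markedCyclesFiberEquiv (c : {c : I ↪ Finset α // ∀ p, c p ∈ σ.cyclesOfLength (ℓ p)}) :
    {f : {f : I → α // IsCycleMarking σ ℓ f} // f.2.markedCycles = c} ≃
      ∀ p, (c.1 p : Finset α) where
  toFun f p := ⟨f.1.1 p, by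
    obtain ⟨f, rfl⟩ := f
    exact mem_cycleFinset.2 (SameCycle.refl σ _)⟩
  invFun x := ⟨⟨fun p => x p, fun p => minimalPeriod_eq_of_mem_cyclesOfLength (c.2 p) (x p).2,
      fun p q h => c.1.injective <| by
        rw [← eq_cycleFinset_of_mem_cyclesOfLength (c.2 p) (x p).2,
          ← eq_cycleFinset_of_mem_cyclesOfLength (c.2 q) (x q).2,
          cycleFinset_eq_cycleFinset_iff.2 h]⟩,
    Subtype.ext <| Embedding.ext fun p => eq_cycleFinset_of_mem_cyclesOfLength (c.2 p) (x p).2⟩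
  left_inv _ := rfl
  right_inv _ := rfl

theorem card_isCycleMarking [Fintype I] (σ : Perm α) (ℓ : I → ℕ) :
    Nat.card {f : I → α // IsCycleMarking σ ℓ f} =
      Nat.card {c : I ↪ Finset α // ∀ p, c p ∈ σ.cyclesOfLength (ℓ p)} * ∏ p, ℓ p := by
  rw [← Nat.card_congr (Equiv.sigmaFiberEquiv fun f : {f // IsCycleMarking σ ℓ f} =>
    f.2.markedCycles), Nat.card_sigma, Nat.card_eq_fintype_card (α := {c // _}), ← card_univ,
    ← smul_eq_mul, ← sum_const]
  refine sum_congr rfl fun c _ => ?_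
  rw [Nat.card_congr (markedCyclesFiberEquiv c), Nat.card_pi]
  exact prod_congr rfl fun p _ => by
    rw [Nat.card_eq_finsetCard, card_of_mem_cyclesOfLength (c.2 p)]

end MarkingsOfOnePermutation

variable (ℓ) in
def rotateFibers : Perm (Σ p : I, Fin (ℓ p)) :=
  Equiv.sigmaCongrRight fun p => finRotate (ℓ p)

theorem rotateFibers_iterate_apply (a : ℕ) (x : Σ p : I, Fin (ℓ p)) :
    (rotateFibers ℓ)^[a] x = ⟨x.1, (finRotate (ℓ x.1))^[a] x.2⟩ := by
  induction a with
  | zero => rfl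
  | succ a ih => rw [iterate_succ_apply', ih, iterate_succ_apply']; rfl

theorem minimalPeriod_rotateFibers (x : Σ p : I, Fin (ℓ p)) :
    minimalPeriod (rotateFibers ℓ) x = ℓ x.1 := by
  obtain ⟨p, j⟩ := x
  rw [← minimalPeriod_finRotate j]
  refine minimalPeriod_eq_minimalPeriod_iff.2 fun a => ?_
  simp only [IsPeriodicPt, IsFixedPt, rotateFibers_iterate_apply, Sigma.mk.inj_iff, heq_eq_eq,
    true_and]

variable (ℓ) in
def orbitMap (σ : Perm α) (f : I → α) (x : Σ p : I, Fin (ℓ p)) : α :=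
  σ^[x.2] (f x.1)

theorem IsCycleMarking.semiconj_orbitMap (hf : IsCycleMarking σ ℓ f) :
    Semiconj (orbitMap ℓ σ f) (rotateFibers ℓ) σ := by
  rintro ⟨p, j⟩
  have := j.neZero
  have hmod := iterate_mod_minimalPeriod_eq (f := σ) (x := f p) (n := j + 1)
  rw [hf.1 p] at hmod
  show σ^[(finRotate (ℓ p) j : ℕ)] (f p) = σ (σ^[j] (f p))
  rw [finRotate_apply, Fin.val_add, Fin.val_one', Nat.add_mod_mod, hmod, iterate_succ_apply']

theorem IsCycleMarking.injective_orbitMap (hf : IsCycleMarking σ ℓ f) :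
    Injective (orbitMap ℓ σ f) := by
  rintro ⟨p, j⟩ ⟨q, j'⟩ (h : σ^[j] (f p) = σ^[j'] (f q))
  have hp : σ.SameCycle (f p) (σ^[j] (f p)) := by
    rw [← coe_pow]; exact sameCycle_pow_right.2 (.refl σ _)
  have hq : σ.SameCycle (f q) (σ^[j'] (f q)) := by
    rw [← coe_pow]; exact sameCycle_pow_right.2 (.refl σ _)
  rw [h] at hp
  obtain rfl : p = q := hf.2 p q (hp.trans hq.symm)
  have hlt : ∀ i : Fin (ℓ p), (i : ℕ) ∈ Set.Iio (minimalPeriod σ (f p)) := fun i => by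
    rw [hf.1 p]; exact i.2
  rw [Fin.ext (iterate_injOn_Iio_minimalPeriod (hlt j) (hlt j') h)]

def IsCycleMarking.orbitEmbedding (hf : IsCycleMarking σ ℓ f) : (Σ p : I, Fin (ℓ p)) ↪ α :=
  ⟨orbitMap ℓ σ f, hf.injective_orbitMap⟩

noncomputable def extendRotation (g : (Σ p : I, Fin (ℓ p)) ↪ α)
    (π : Perm {x // x ∉ Set.range g}) : Perm α :=
  open Classical in
  ((Equiv.ofInjective g g.injective).permCongr (rotateFibers ℓ)).subtypeCongr π

def baseMarks (hℓ : ∀ p, 0 < ℓ p) (g : (Σ p : I, Fin (ℓ p)) ↪ α) (p : I) : α :=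
  g ⟨p, ⟨0, hℓ p⟩⟩

variable {g : (Σ p : I, Fin (ℓ p)) ↪ α} {π : Perm {x // x ∉ Set.range g}}

theorem semiconj_extendRotation : Semiconj g (rotateFibers ℓ) (extendRotation g π) := fun x => by
  classical
  rw [extendRotation, subtypeCongr.left_apply _ _ (Set.mem_range_self x), permCongr_apply,
    ofInjective_symm_apply]
  rfl

theorem extendRotation_apply_of_notMem {x : α} (hx : x ∉ Set.range g) :
    extendRotation g π x = π ⟨x, hx⟩ := by
  classical
  rw [extendRotation, subtypeCongr.right_apply _ _ hx]

theorem orbitMap_extendRotation (hℓ : ∀ p, 0 < ℓ p) :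
    orbitMap ℓ (extendRotation g π) (baseMarks hℓ g) = g := by
  funext ⟨p, j⟩
  have := j.neZero
  rw [orbitMap, baseMarks, ← (semiconj_extendRotation.iterate_right j).eq,
    rotateFibers_iterate_apply, finRotate_iterate_apply, Fin.cast_val_eq_self]
  congr
  exact zero_add j

theorem isCycleMarking_extendRotation [Finite α] (hℓ : ∀ p, 0 < ℓ p) :
    IsCycleMarking (extendRotation g π) ℓ (baseMarks hℓ g) := by
  refine ⟨fun p => ?_, fun p q h => ?_⟩
  · rw [baseMarks, semiconj_extendRotation.minimalPeriod_eq g.injective,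
      minimalPeriod_rotateFibers]
  · obtain ⟨a, ha⟩ := h.exists_nat_pow_eq
    rw [coe_pow, baseMarks, baseMarks, ← (semiconj_extendRotation.iterate_right a).eq] at ha
    simpa [rotateFibers_iterate_apply] using congrArg Sigma.fst (g.injective ha)

noncomputable def orbitEmbeddingFiberEquiv [Finite α] (hℓ : ∀ p, 0 < ℓ p)
    (g : (Σ p : I, Fin (ℓ p)) ↪ α) :
    {q : {q : Perm α × (I → α) // IsCycleMarking q.1 ℓ q.2} // q.2.orbitEmbedding = g} ≃
      Perm {x // x ∉ Set.range g} where
  toFun q := q.1.1.1.subtypePerm fun x => by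
    obtain ⟨⟨⟨σ, f⟩, hf⟩, rfl⟩ := q
    exact not_congr (hf.semiconj_orbitMap.apply_mem_range_iff σ.injective x)
  invFun π := ⟨⟨(extendRotation g π, baseMarks hℓ g), isCycleMarking_extendRotation hℓ⟩,
    DFunLike.coe_injective (orbitMap_extendRotation hℓ)⟩
  left_inv := by
    rintro ⟨⟨⟨σ, f⟩, hf⟩, rfl⟩
    refine Subtype.ext (Subtype.ext (Prod.ext (Equiv.ext fun x => ?_) rfl))
    by_cases hx : x ∈ Set.range (orbitMap ℓ σ f)
    · obtain ⟨y, rfl⟩ := hx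
      exact (semiconj_extendRotation y).symm.trans (hf.semiconj_orbitMap y)
    · exact extendRotation_apply_of_notMem hx
  right_inv π := Equiv.ext fun x => Subtype.ext (extendRotation_apply_of_notMem x.2)

theorem card_isCycleMarking_pairs [Fintype α] [Fintype I] (hℓ : ∀ p, 0 < ℓ p) :
    Nat.card {q : Perm α × (I → α) // IsCycleMarking q.1 ℓ q.2} =
      (Fintype.card α).descFactorial (∑ p, ℓ p) * (Fintype.card α - ∑ p, ℓ p).factorial := by
  classical
  rw [← Nat.card_congr (Equiv.sigmaFiberEquiv fun q : {q : Perm α × (I → α) //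
    IsCycleMarking q.1 ℓ q.2} => q.2.orbitEmbedding), Nat.card_sigma]
  have hfiber (g : (Σ p : I, Fin (ℓ p)) ↪ α) :
      Nat.card {q : {q : Perm α × (I → α) // IsCycleMarking q.1 ℓ q.2} //
        q.2.orbitEmbedding = g} = (Fintype.card α - ∑ p, ℓ p).factorial := by
    rw [Nat.card_congr (orbitEmbeddingFiberEquiv hℓ g), Nat.card_perm, Nat.card_eq_fintype_card,
      Fintype.card_subtype_compl, Set.card_range_of_injective g.injective, Fintype.card_sigma]
    simp
  simp only [hfiber, sum_const, card_univ, Fintype.card_embedding_eq, Fintype.card_sigma,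
    Fintype.card_fin, smul_eq_mul]

end CycleMarking

section NumCycles

open Equiv.Perm

theorem numCycles_eq_card_cyclesOfLength {n j : ℕ} (σ : Perm (Fin n)) (hj : 0 < j) :
    numCycles σ j = #(σ.cyclesOfLength j) := by
  rw [numCycles, Set.ncard_eq_toFinset_card', Set.toFinset_ofPred, card_filter_minimalPeriod_eq,
    Nat.mul_div_cancel_left _ hj]

variable {ι : Type*} [Fintype ι] {n : ℕ} {k : ι → ℕ}

theorem sum_prod_descFactorial_numCycles_mul (hk : ∀ t, 0 < k t) (hk' : Injective k)
    (m : ι → ℕ) :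
    (∑ σ : Perm (Fin n), ∏ t, (numCycles σ (k t)).descFactorial (m t)) * ∏ t, k t ^ m t =
      if ∑ t, k t * m t ≤ n then n.factorial else 0 := by
  have hmarkings (σ : Perm (Fin n)) :
      (∏ t, (numCycles σ (k t)).descFactorial (m t)) * ∏ t, k t ^ m t =
        Nat.card {f : (Σ t, Fin (m t)) → Fin n // IsCycleMarking σ (fun p => k p.1) f} := by
    rw [card_isCycleMarking, card_embedding_sigma_of_pairwiseDisjoint
      (S := fun t => σ.cyclesOfLength (k t)) fun i j hij => disjoint_cyclesOfLength (hk'.ne hij),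
      Fintype.prod_sigma]
    simp [numCycles_eq_card_cyclesOfLength σ (hk _)]
  have hlength : ∑ p : Σ t, Fin (m t), k p.1 = ∑ t, k t * m t := by
    simp [Fintype.sum_sigma, mul_comm]
  rw [sum_mul, sum_congr rfl fun σ _ => hmarkings σ, ← Nat.card_sigma,
    ← Nat.card_congr (subtypeProdEquivSigmaSubtype _),
    card_isCycleMarking_pairs (I := Σ t, Fin (m t)) fun p => hk p.1, hlength, Fintype.card_fin]
  split_ifs with h
  · rw [mul_comm, Nat.factorial_mul_descFactorial h]
  · rw [Nat.descFactorial_eq_zero_iff_lt.2 (not_le.1 h), zero_mul]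

theorem factorialMoment_numCycles (hk : ∀ t, 0 < k t) (hk' : Injective k) (m : ι → ℕ) :
    (n.factorial : ℝ)⁻¹ * ∑ σ : Perm (Fin n), ∏ t, ((numCycles σ (k t)).descFactorial (m t) : ℝ) =
      if ∑ t, k t * m t ≤ n then ∏ t, ((k t : ℝ) ^ m t)⁻¹ else 0 := by
  have hkpow : (∏ t, (k t : ℝ) ^ m t) ≠ 0 :=
    prod_ne_zero_iff.2 fun t _ => pow_ne_zero _ (Nat.cast_ne_zero.2 (hk t).ne')
  have hcount := congrArg (Nat.cast (R := ℝ))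
    (sum_prod_descFactorial_numCycles_mul (n := n) hk hk' m)
  push_cast at hcount
  rw [← eq_div_iff hkpow] at hcount
  rw [hcount, prod_inv_distrib]
  split_ifs
  · field_simp
  · simp

end NumCycles

/-- for a uniform random permutation of `{1,…,n}`, for pairwise distinct
`k_1,…,k_s ≥ 1` and `r_1,…,r_s ≥ 1`,
`E(∏_t (C_{k_t})^{r_t}) = Σ_{m_1=1}^{r_1} ⋯ Σ_{m_s=1}^{r_s} ∏_t S(r_t, m_t)/k_t^{m_t}`,
the sum being restricted to `Σ_t k_t m_t ≤ n`. -/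
theorem stmt19 (n s : ℕ) (k r : Fin s → ℕ)
    (hk : ∀ t, 1 ≤ k t) (hkdist : Function.Injective k) (hr : ∀ t, 1 ≤ r t) :
    ((n.factorial : ℝ))⁻¹ *
        ∑ σ : Equiv.Perm (Fin n), ∏ t, (numCycles σ (k t) : ℝ) ^ (r t) =
      ∑ m : (∀ t : Fin s, Fin (r t)),
        if ∑ t, k t * ((m t : ℕ) + 1) ≤ n then
          ∏ t, (stirling2 (r t) ((m t : ℕ) + 1) : ℝ) / (k t : ℝ) ^ ((m t : ℕ) + 1)
        else 0 := by
  have hpow (σ : Perm (Fin n)) : ∏ t, (numCycles σ (k t) : ℝ) ^ r t =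
      ∑ m : ∀ t, Fin (r t), ∏ t, ((stirling2 (r t) (m t + 1) : ℝ) *
        ((numCycles σ (k t)).descFactorial (m t + 1) : ℝ)) := by
    rw [← Fintype.prod_sum fun t (j : Fin (r t)) =>
      (stirling2 (r t) (j + 1) : ℝ) * ((numCycles σ (k t)).descFactorial (j + 1) : ℝ)]
    refine prod_congr rfl fun t _ => ?_
    rw [stirling2_eq_stirlingSecond]
    exact_mod_cast Nat.pow_eq_sum_fin_stirlingSecond_mul_descFactorial _
      (Nat.one_le_iff_ne_zero.1 (hr t))
  simp_rw [hpow, prod_mul_distrib]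
  rw [sum_comm, mul_sum]
  refine sum_congr rfl fun m _ => ?_
  rw [← mul_sum, mul_left_comm, factorialMoment_numCycles hk hkdist fun t => (m t : ℕ) + 1]
  split_ifs
  · simp only [div_eq_mul_inv, prod_mul_distrib]
  · simp
end
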